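/- arXiv:1810.03520 — 9 statements merged into one kernel-verified Lean document; each statement's English description precedes it below -/
import Mathlib

section
/- Let m, n, p be positive integers, with p₁ = lcm(n,p)/p, q₁ = lcm(q,r)/q for positive integers q, r. Define n₁ = lcm(n,p)/n, p₂ = lcm(r, q·p₁)/(q·p₁), n₂ = lcm(n, p·q₁)/n, r₁ = lcm(q,r)/r, r₂ = lcm(r, q·p₁)/r, q₂ = lcm(n, p·q₁)/(p·q₁). Then n₁·p₂ = n₂, p₁·p₂ = q₁·q₂, and r₂ = r₁·q₂. -/
open Matrix

/-- `x ⊗ 1_k`: the Kronecker product of `x ∈ ℝ^m` with the all-ones vector `1_k ∈ ℝ^k`,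
repeating each entry of `x` exactly `k` times. -/
noncomputable def vkron {m : ℕ} (x : Fin m → ℝ) (k : ℕ) : Fin (m * k) → ℝ :=
  fun j => x ⟨(j : ℕ) / k, Nat.div_lt_of_lt_mul (Nat.mul_comm m k ▸ j.isLt)⟩

/-- `A ⊗ J_k` where `J_k = (1/k)·(all-ones k×k matrix)`. -/
noncomputable def mkronJ {m n : ℕ} (A : Matrix (Fin m) (Fin n) ℝ) (k : ℕ) :
    Matrix (Fin (m * k)) (Fin (n * k)) ℝ :=
  fun i j => A ⟨(i : ℕ) / k, Nat.div_lt_of_lt_mul (Nat.mul_comm m k ▸ i.isLt)⟩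
               ⟨(j : ℕ) / k, Nat.div_lt_of_lt_mul (Nat.mul_comm n k ▸ j.isLt)⟩ / k

/-- `J_k`, the `k×k` matrix with all entries `1/k`. -/
noncomputable def Jmat (k : ℕ) : Matrix (Fin k) (Fin k) ℝ := fun _ _ => 1 / k

/-- The all-ones column vector `1_k` as a `k×1` matrix. -/
def onesColM (k : ℕ) : Matrix (Fin k) (Fin 1) ℝ := fun _ _ => 1

/-- The transpose `1_kᵀ` of the all-ones vector, a `1×k` matrix. -/
def onesRowM (k : ℕ) : Matrix (Fin 1) (Fin k) ℝ := fun _ _ => 1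

/-- Kronecker product realized on `Fin (a*c)` / `Fin (b*d)` indices. -/
noncomputable def kron {a b c d : ℕ} (A : Matrix (Fin a) (Fin b) ℝ)
    (B : Matrix (Fin c) (Fin d) ℝ) : Matrix (Fin (a * c)) (Fin (b * d)) ℝ :=
  Matrix.reindex finProdFinEquiv finProdFinEquiv (Matrix.kroneckerMap (· * ·) A B)

private theorem lcm_eq_left (n p : ℕ) : n * (Nat.lcm n p / n) = Nat.lcm n p :=
  Nat.mul_div_cancel' (Nat.dvd_lcm_left n p)

private theorem lcm_eq_right (n p : ℕ) : p * (Nat.lcm n p / p) = Nat.lcm n p :=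
  Nat.mul_div_cancel' (Nat.dvd_lcm_right n p)

private theorem lcm_mid (n p : ℕ) :
    n * (Nat.lcm n p / n) = p * (Nat.lcm n p / p) := by
  rw [lcm_eq_left, lcm_eq_right]

/-- The second semi-tensor product `A ∘ B := (A ⊗ J_{t/n})(B ⊗ J_{t/p})`, `t = lcm(n,p)`. -/
noncomputable def smul2 {m n p q : ℕ} (A : Matrix (Fin m) (Fin n) ℝ)
    (B : Matrix (Fin p) (Fin q) ℝ) :
    Matrix (Fin (m * (Nat.lcm n p / n))) (Fin (q * (Nat.lcm n p / p))) ℝ :=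
  mkronJ A (Nat.lcm n p / n) *
    (mkronJ B (Nat.lcm n p / p)).submatrix (Fin.cast (lcm_mid n p)) id

/-- The MV-2 product `A ⊙ x := (A ⊗ J_{t/n})(x ⊗ 1_{t/r})`, `t = lcm(n,r)`. -/
noncomputable def mv2 {m n r : ℕ} (A : Matrix (Fin m) (Fin n) ℝ) (x : Fin r → ℝ) :
    Fin (m * (Nat.lcm n r / n)) → ℝ :=
  (mkronJ A (Nat.lcm n r / n)).mulVec
    (fun j => vkron x (Nat.lcm n r / r) (Fin.cast (lcm_mid n r) j))

/-- V-addition `x ⊞ y := x ⊗ 1_{t/m} + y ⊗ 1_{t/n} ∈ ℝ^t`, `t = lcm(m,n)`. -/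
noncomputable def vadd' {m n : ℕ} (x : Fin m → ℝ) (y : Fin n → ℝ) :
    Fin (Nat.lcm m n) → ℝ :=
  fun j => vkron x (Nat.lcm m n / m) (Fin.cast (lcm_eq_left m n).symm j) +
           vkron y (Nat.lcm m n / n) (Fin.cast (lcm_eq_right m n).symm j)

/-- V-subtraction `x ⊟ y := x ⊗ 1_{t/m} − y ⊗ 1_{t/n} ∈ ℝ^t`, `t = lcm(m,n)`. -/
noncomputable def vsub' {m n : ℕ} (x : Fin m → ℝ) (y : Fin n → ℝ) :
    Fin (Nat.lcm m n) → ℝ :=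
  fun j => vkron x (Nat.lcm m n / m) (Fin.cast (lcm_eq_left m n).symm j) -
           vkron y (Nat.lcm m n / n) (Fin.cast (lcm_eq_right m n).symm j)

/-- Dimension-free norm `‖z‖_V = (1/√r)·‖z‖` for `z ∈ ℝ^r`. -/
noncomputable def vnorm {r : ℕ} (z : Fin r → ℝ) : ℝ :=
  Real.sqrt ((∑ i, z i ^ 2) / r)

/-- Dimension-free inner product `⟨u,v⟩_V = (1/t)·⟨u ⊗ 1_{t/a}, v ⊗ 1_{t/b}⟩`. -/
noncomputable def vinner {a b : ℕ} (u : Fin a → ℝ) (v : Fin b → ℝ) : ℝ :=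
  (∑ j : Fin (Nat.lcm a b),
      vkron u (Nat.lcm a b / a) (Fin.cast (lcm_eq_left a b).symm j) *
      vkron v (Nat.lcm a b / b) (Fin.cast (lcm_eq_right a b).symm j)) / (Nat.lcm a b)

private theorem lcm_mid' (m n : ℕ) :
    n * (Nat.lcm m n / n) = m * (Nat.lcm m n / m) := by
  rw [lcm_eq_right, lcm_eq_left]

/-- `Π^m_n := (1/β)(I_n ⊗ 1_βᵀ)(I_m ⊗ 1_α)`, `t = lcm(m,n)`, `α = t/m`, `β = t/n`. -/
noncomputable def PiMat (m n : ℕ) : Matrix (Fin n) (Fin m) ℝ :=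
  ((Nat.lcm m n / n : ℕ) : ℝ)⁻¹ •
    ((kron (1 : Matrix (Fin n) (Fin n) ℝ) (onesRowM (Nat.lcm m n / n))).submatrix
        (Fin.cast (Nat.mul_one n).symm) id *
      (kron (1 : Matrix (Fin m) (Fin m) ℝ) (onesColM (Nat.lcm m n / m))).submatrix
        (Fin.cast (lcm_mid' m n)) (Fin.cast (Nat.mul_one m).symm))

/-- Spectral (operator) norm of a matrix w.r.t. Euclidean norms. -/
noncomputable def specNorm {m n : ℕ} (A : Matrix (Fin m) (Fin n) ℝ) : ℝ :=
  ‖LinearMap.toContinuousLinearMap (Matrix.toEuclideanLin A)‖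

private theorem mylcm_left_comm (a b c : ℕ) :
    Nat.lcm a (Nat.lcm b c) = Nat.lcm b (Nat.lcm a c) := by
  rw [← Nat.lcm_assoc, Nat.lcm_comm a b, Nat.lcm_assoc]

/-- key divisibility identities for associativity of the second STP. -/
theorem stmt_1 (n p q r : ℕ) (hn : 0 < n) (hp : 0 < p) (hq : 0 < q) (hr : 0 < r)
    (n₁ p₁ q₁ r₁ n₂ p₂ q₂ r₂ : ℕ)
    (hn₁ : n₁ = Nat.lcm n p / n) (hp₁ : p₁ = Nat.lcm n p / p)
    (hq₁ : q₁ = Nat.lcm q r / q) (hr₁ : r₁ = Nat.lcm q r / r)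
    (hp₂ : p₂ = Nat.lcm r (q * p₁) / (q * p₁)) (hr₂ : r₂ = Nat.lcm r (q * p₁) / r)
    (hn₂ : n₂ = Nat.lcm n (p * q₁) / n) (hq₂ : q₂ = Nat.lcm n (p * q₁) / (p * q₁)) :
    n₁ * p₂ = n₂ ∧ p₁ * p₂ = q₁ * q₂ ∧ r₂ = r₁ * q₂ := by
  -- multiplicative reformulations
  have hL1n : n * n₁ = Nat.lcm n p := by rw [hn₁]; exact Nat.mul_div_cancel' (Nat.dvd_lcm_left n p)
  have hL1p : p * p₁ = Nat.lcm n p := by rw [hp₁]; exact Nat.mul_div_cancel' (Nat.dvd_lcm_right n p)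
  have hL2q : q * q₁ = Nat.lcm q r := by rw [hq₁]; exact Nat.mul_div_cancel' (Nat.dvd_lcm_left q r)
  have hL2r : r * r₁ = Nat.lcm q r := by rw [hr₁]; exact Nat.mul_div_cancel' (Nat.dvd_lcm_right q r)
  have hL3p : (q * p₁) * p₂ = Nat.lcm r (q * p₁) := by
    rw [hp₂]; exact Nat.mul_div_cancel' (Nat.dvd_lcm_right _ _)
  have hL3r : r * r₂ = Nat.lcm r (q * p₁) := by
    rw [hr₂]; exact Nat.mul_div_cancel' (Nat.dvd_lcm_left _ _)
  have hL4n : n * n₂ = Nat.lcm n (p * q₁) := by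
    rw [hn₂]; exact Nat.mul_div_cancel' (Nat.dvd_lcm_left _ _)
  have hL4q : (p * q₁) * q₂ = Nat.lcm n (p * q₁) := by
    rw [hq₂]; exact Nat.mul_div_cancel' (Nat.dvd_lcm_right _ _)
  -- key identity : p * L3 = q * L4
  have key : p * Nat.lcm r (q * p₁) = q * Nat.lcm n (p * q₁) := by
    have h1 : p * Nat.lcm r (q * p₁) = Nat.lcm (p * r) (q * Nat.lcm n p) := by
      rw [← Nat.lcm_mul_left, mul_left_comm p q p₁, hL1p]
    have h2 : q * Nat.lcm n (p * q₁) = Nat.lcm (q * n) (p * Nat.lcm q r) := by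
      rw [← Nat.lcm_mul_left, mul_left_comm q p q₁, hL2q]
    rw [h1, h2, ← Nat.lcm_mul_left (m := q) (n := n) (k := p),
      ← Nat.lcm_mul_left (m := p) (n := q) (k := r), mul_comm q p,
      mylcm_left_comm, Nat.lcm_comm (p * r) (p * q)]
  refine ⟨?_, ?_, ?_⟩
  · have h : (q * n) * (n₁ * p₂) = (q * n) * n₂ := by
      calc (q * n) * (n₁ * p₂) = q * (n * n₁) * p₂ := by ring
        _ = q * (p * p₁) * p₂ := by rw [hL1n, hL1p]
        _ = p * ((q * p₁) * p₂) := by ring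
        _ = p * Nat.lcm r (q * p₁) := by rw [hL3p]
        _ = q * (n * n₂) := by rw [key, hL4n]
        _ = (q * n) * n₂ := by ring
    exact Nat.eq_of_mul_eq_mul_left (Nat.mul_pos hq hn) h
  · have h : (p * q) * (p₁ * p₂) = (p * q) * (q₁ * q₂) := by
      calc (p * q) * (p₁ * p₂) = p * ((q * p₁) * p₂) := by ring
        _ = p * Nat.lcm r (q * p₁) := by rw [hL3p]
        _ = q * ((p * q₁) * q₂) := by rw [key, hL4q]
        _ = (p * q) * (q₁ * q₂) := by ring
    exact Nat.eq_of_mul_eq_mul_left (Nat.mul_pos hp hq) h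
  · have h : (p * r) * r₂ = (p * r) * (r₁ * q₂) := by
      calc (p * r) * r₂ = p * (r * r₂) := by ring
        _ = p * Nat.lcm r (q * p₁) := by rw [hL3r]
        _ = q * ((p * q₁) * q₂) := by rw [key, hL4q]
        _ = p * (q * q₁) * q₂ := by ring
        _ = p * (r * r₁) * q₂ := by rw [hL2q, hL2r]
        _ = (p * r) * (r₁ * q₂) := by ring
    exact Nat.eq_of_mul_eq_mul_left (Nat.mul_pos hp hr) h
end

section
/- The second semi-tensor product ∘ on the set of all real matrices of arbitrary finite dimensions is associative: (A ∘ B) ∘ C = A ∘ (B ∘ C) for all real matrices A, B, C. -/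
open Matrix

private def ev {m n : ℕ} (A : Matrix (Fin m) (Fin n) ℝ) (i j : ℕ) : ℝ :=
  if h : i < m ∧ j < n then A ⟨i, h.1⟩ ⟨j, h.2⟩ else 0

private lemma ev_eq {m n : ℕ} (A : Matrix (Fin m) (Fin n) ℝ) (i : Fin m) (j : Fin n) :
    A i j = ev A (i : ℕ) (j : ℕ) := by
  rw [ev, dif_pos ⟨i.isLt, j.isLt⟩]

private lemma sum_div_expand (f : ℕ → ℝ) (T e : ℕ) (he : 0 < e) :
    ∑ k ∈ Finset.range (T * e), f (k / e) = e * ∑ k ∈ Finset.range T, f k := by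
  induction T with
  | zero => simp
  | succ T ih =>
    have h : (T + 1) * e = T * e + e := by ring
    rw [h, Finset.sum_range_add, ih, Finset.sum_range_succ]
    have h2 : ∀ i ∈ Finset.range e, f ((T * e + i) / e) = f T := by
      intro i hi
      rw [show T * e + i = i + e * T by ring, Nat.add_mul_div_left _ _ he,
        Nat.div_eq_of_lt (Finset.mem_range.mp hi), zero_add]
    rw [Finset.sum_congr rfl h2, Finset.sum_const, Finset.card_range, nsmul_eq_mul]
    ring

private lemma smul2_ev {m n p q : ℕ}
    (A : Matrix (Fin m) (Fin n) ℝ) (B : Matrix (Fin p) (Fin q) ℝ)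
    {i j : ℕ} (hi : i < m * (Nat.lcm n p / n)) (hj : j < q * (Nat.lcm n p / p)) :
    ev (smul2 A B) i j =
      (∑ k ∈ Finset.range (Nat.lcm n p),
        ev A (i / (Nat.lcm n p / n)) (k / (Nat.lcm n p / n)) *
        ev B (k / (Nat.lcm n p / p)) (j / (Nat.lcm n p / p))) /
      (((Nat.lcm n p / n) * (Nat.lcm n p / p) : ℕ) : ℝ) := by
  rw [ev, dif_pos ⟨hi, hj⟩]
  rw [smul2, Matrix.mul_apply]
  have h1 : ∀ k : Fin (n * (Nat.lcm n p / n)),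
      mkronJ A (Nat.lcm n p / n) ⟨i, hi⟩ k *
        ((mkronJ B (Nat.lcm n p / p)).submatrix (Fin.cast (lcm_mid n p)) id) k ⟨j, hj⟩ =
      ev A (i / (Nat.lcm n p / n)) ((k : ℕ) / (Nat.lcm n p / n)) *
        ev B ((k : ℕ) / (Nat.lcm n p / p)) (j / (Nat.lcm n p / p)) /
        (((Nat.lcm n p / n) * (Nat.lcm n p / p) : ℕ) : ℝ) := by
    intro k
    rw [Matrix.submatrix_apply, mkronJ, mkronJ]
    simp only [id_eq, Fin.coe_cast]
    rw [ev_eq A, ev_eq B]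
    rw [div_mul_div_comm, Nat.cast_mul]
  rw [Fintype.sum_congr _ _ h1]
  rw [Fin.sum_univ_eq_sum_range (fun k => ev A (i / (Nat.lcm n p / n)) (k / (Nat.lcm n p / n)) *
        ev B (k / (Nat.lcm n p / p)) (j / (Nat.lcm n p / p)) /
        (((Nat.lcm n p / n) * (Nat.lcm n p / p) : ℕ) : ℝ))]
  rw [lcm_eq_left, ← Finset.sum_div]

private lemma key_nat {n p q r : ℕ} (hn : 0 < n) (hp : 0 < p) (hq : 0 < q) (hr : 0 < r) :
    Nat.lcm n p * (Nat.lcm (q * (Nat.lcm n p / p)) r / (q * (Nat.lcm n p / p)))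
      = Nat.lcm n (p * (Nat.lcm q r / q)) := by
  set t1 := Nat.lcm n p with ht1
  set β := t1 / p with hβ
  set γ := Nat.lcm (q * β) r / (q * β) with hγ
  set β' := Nat.lcm q r / q with hβ'
  have hpβ : p * β = t1 := Nat.mul_div_cancel' (Nat.dvd_lcm_right n p)
  have ht1pos : 0 < t1 := Nat.lcm_pos hn hp
  have hβpos : 0 < β := by
    rcases Nat.eq_zero_or_pos β with h | h
    · rw [h, mul_zero] at hpβ; omega
    · exact h
  have hqβ : q * β' = Nat.lcm q r := Nat.mul_div_cancel' (Nat.dvd_lcm_left q r)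
  have h1 : q * β * γ = Nat.lcm (q * β) r := Nat.mul_div_cancel' (Nat.dvd_lcm_left _ _)
  apply Nat.dvd_antisymm
  · -- t1 * γ ∣ lcm n (p * β')
    set T := Nat.lcm n (p * β') with hT
    have hnT : n ∣ T := Nat.dvd_lcm_left _ _
    have hpβ'T : p * β' ∣ T := Nat.dvd_lcm_right _ _
    have hpT : p ∣ T := dvd_trans (Dvd.intro β' rfl) hpβ'T
    have hprqT : p * r ∣ q * T := by
      have h2 : p * r ∣ p * Nat.lcm q r := mul_dvd_mul_left p (Nat.dvd_lcm_right q r)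
      have h3 : p * Nat.lcm q r = q * (p * β') := by rw [← hqβ]; ring
      exact dvd_trans (h3 ▸ h2) (mul_dvd_mul_left q hpβ'T)
    obtain ⟨sf, hs⟩ := Nat.lcm_dvd hnT hpT
    have hr1 : r ∣ q * β * sf := by
      have h4 : q * T = p * (q * β * sf) := by rw [hs, ← ht1, ← hpβ]; ring
      rw [h4] at hprqT
      exact (Nat.mul_dvd_mul_iff_left hp).mp hprqT
    have h5 : q * β * γ ∣ q * β * sf := by
      rw [h1]; exact Nat.lcm_dvd (Dvd.intro sf rfl) hr1
    have hγs : γ ∣ sf := (Nat.mul_dvd_mul_iff_left (Nat.mul_pos hq hβpos)).mp h5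
    rw [hs]
    exact mul_dvd_mul_left t1 hγs
  · -- lcm n (p * β') ∣ t1 * γ
    set T := t1 * γ with hTdef
    have hnT : n ∣ T := dvd_mul_of_dvd_left (Nat.dvd_lcm_left n p) γ
    have hprqT : p * r ∣ q * T := by
      have h4 : q * T = p * Nat.lcm (q * β) r := by rw [hTdef, ← hpβ, ← h1]; ring
      rw [h4]
      exact mul_dvd_mul_left p (Nat.dvd_lcm_right _ _)
    have hpqqT : p * q ∣ q * T := by
      have : p ∣ T := dvd_mul_of_dvd_left (Nat.dvd_lcm_right n p) γ
      rw [mul_comm p q]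
      exact mul_dvd_mul_left q this
    have h6 : p * Nat.lcm q r ∣ q * T := by
      rw [← Nat.lcm_mul_left]
      exact Nat.lcm_dvd hpqqT hprqT
    have h7 : q * (p * β') ∣ q * T := by
      rw [show q * (p * β') = p * Nat.lcm q r by rw [← hqβ]; ring]
      exact h6
    exact Nat.lcm_dvd hnT ((Nat.mul_dvd_mul_iff_left hq).mp h7)
private lemma lhs_entry {m n p q r s : ℕ} (hn : 0 < n) (hp : 0 < p) (hq : 0 < q) (hr : 0 < r)
    (A : Matrix (Fin m) (Fin n) ℝ) (B : Matrix (Fin p) (Fin q) ℝ)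
    (C : Matrix (Fin r) (Fin s) ℝ) (α β γ δ : ℕ)
    (hα : α = Nat.lcm n p / n) (hβ : β = Nat.lcm n p / p)
    (hγ : γ = Nat.lcm (q * β) r / (q * β)) (hδ : δ = Nat.lcm (q * β) r / r)
    {i j : ℕ} (hi : i < m * α * γ) (hj : j < s * δ) :
    ev (smul2 (smul2 A B) C) i j =
      (∑ k ∈ Finset.range (n * (γ * α)), ∑ l ∈ Finset.range (q * (γ * β)),
        ev A (i / (γ * α)) (k / (γ * α)) *
          (ev B (k / (γ * β)) (l / (γ * β)) * ev C (l / δ) (j / δ))) /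
        (((γ * α) * ((γ * β) * δ) : ℕ) : ℝ) := by
  have hnα : n * α = Nat.lcm n p := by rw [hα]; exact lcm_eq_left n p
  have hpβ : p * β = Nat.lcm n p := by rw [hβ]; exact lcm_eq_right n p
  have hL2 : q * β * γ = Nat.lcm (q * β) r := by
    rw [hγ]; exact Nat.mul_div_cancel' (Nat.dvd_lcm_left _ _)
  have hrδ : r * δ = Nat.lcm (q * β) r := by
    rw [hδ]; exact Nat.mul_div_cancel' (Nat.dvd_lcm_right _ _)
  have ht1pos : 0 < Nat.lcm n p := Nat.lcm_pos hn hp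
  have hαpos : 0 < α := by
    rcases Nat.eq_zero_or_pos α with h | h
    · rw [h, mul_zero] at hnα; omega
    · exact h
  have hβpos : 0 < β := by
    rcases Nat.eq_zero_or_pos β with h | h
    · rw [h, mul_zero] at hpβ; omega
    · exact h
  have ht2pos : 0 < Nat.lcm (q * β) r := Nat.lcm_pos (Nat.mul_pos hq hβpos) hr
  have hγpos : 0 < γ := by
    rcases Nat.eq_zero_or_pos γ with h | h
    · rw [h, mul_zero] at hL2; omega
    · exact h
  have hi' : i < m * (Nat.lcm n p / n) *
      (Nat.lcm (q * (Nat.lcm n p / p)) r / (q * (Nat.lcm n p / p))) := by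
    rw [← hα, ← hβ, ← hγ]; exact hi
  have hj' : j < s * (Nat.lcm (q * (Nat.lcm n p / p)) r / r) := by
    rw [← hβ, ← hδ]; exact hj
  rw [smul2_ev (smul2 A B) C hi' hj']
  simp only [← hα, ← hβ, ← hγ, ← hδ]
  have hstep : ∀ l ∈ Finset.range (Nat.lcm (q * β) r),
      ev (smul2 A B) (i / γ) (l / γ) * ev C (l / δ) (j / δ) =
      (∑ k ∈ Finset.range (Nat.lcm n p),
          ev A (i / (γ * α)) (k / α) * ev B (k / β) (l / (γ * β))) / ((α * β : ℕ) : ℝ) *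
        ev C (l / δ) (j / δ) := by
    intro l hl
    have h1 : i / γ < m * (Nat.lcm n p / n) := by
      rw [← hα]
      exact Nat.div_lt_of_lt_mul (lt_of_lt_of_eq hi (mul_comm _ _))
    have h2 : l / γ < q * (Nat.lcm n p / p) := by
      rw [← hβ]
      refine Nat.div_lt_of_lt_mul ?_
      rw [mul_comm γ (q * β), hL2]
      exact Finset.mem_range.mp hl
    rw [smul2_ev A B h1 h2]
    simp only [← hα, ← hβ, Nat.div_div_eq_div_mul]
  rw [Finset.sum_congr rfl hstep]
  have hstep2 : ∀ l ∈ Finset.range (Nat.lcm (q * β) r),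
      (∑ k ∈ Finset.range (Nat.lcm n p),
          ev A (i / (γ * α)) (k / α) * ev B (k / β) (l / (γ * β))) / ((α * β : ℕ) : ℝ) *
        ev C (l / δ) (j / δ) =
      (∑ k ∈ Finset.range (Nat.lcm n p * γ),
          ev A (i / (γ * α)) (k / (γ * α)) *
            (ev B (k / (γ * β)) (l / (γ * β)) * ev C (l / δ) (j / δ))) /
        ((γ : ℝ) * ((α * β : ℕ) : ℝ)) := by
    intro l _
    have hexp := sum_div_expand
      (fun k => ev A (i / (γ * α)) (k / α) *
        (ev B (k / β) (l / (γ * β)) * ev C (l / δ) (j / δ))) (Nat.lcm n p) γ hγpos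
    simp only [Nat.div_div_eq_div_mul] at hexp
    rw [hexp]
    rw [mul_div_mul_left _ _ (by positivity : (γ : ℝ) ≠ 0)]
    rw [div_mul_eq_mul_div, Finset.sum_mul]
    congr 1
    exact Finset.sum_congr rfl fun k _ => by ring
  rw [Finset.sum_congr rfl hstep2]
  rw [← Finset.sum_div, div_div, Finset.sum_comm]
  rw [show Nat.lcm (q * β) r = q * (γ * β) by rw [← hL2]; ring,
    show Nat.lcm n p * γ = n * (γ * α) by rw [← hnα]; ring]
  congr 1
  push_cast
  ring
private lemma rhs_entry {m n p q r s : ℕ} (hn : 0 < n) (hp : 0 < p) (hq : 0 < q) (hr : 0 < r)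
    (A : Matrix (Fin m) (Fin n) ℝ) (B : Matrix (Fin p) (Fin q) ℝ)
    (C : Matrix (Fin r) (Fin s) ℝ) (β' γ' α₂ δ'' : ℕ)
    (hβ' : β' = Nat.lcm q r / q) (hγ' : γ' = Nat.lcm q r / r)
    (hα₂ : α₂ = Nat.lcm n (p * β') / n) (hδ'' : δ'' = Nat.lcm n (p * β') / (p * β'))
    {i j : ℕ} (hi : i < m * α₂) (hj : j < s * γ' * δ'') :
    ev (smul2 A (smul2 B C)) i j =
      (∑ k ∈ Finset.range (n * α₂), ∑ l ∈ Finset.range (q * (δ'' * β')),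
        ev A (i / α₂) (k / α₂) *
          (ev B (k / (δ'' * β')) (l / (δ'' * β')) *
            ev C (l / (δ'' * γ')) (j / (δ'' * γ')))) /
        ((α₂ * ((δ'' * β') * (δ'' * γ')) : ℕ) : ℝ) := by
  have hqβ' : q * β' = Nat.lcm q r := by rw [hβ']; exact lcm_eq_left q r
  have hrγ' : r * γ' = Nat.lcm q r := by rw [hγ']; exact lcm_eq_right q r
  have hnα₂ : n * α₂ = Nat.lcm n (p * β') := by rw [hα₂]; exact lcm_eq_left _ _
  have hpδ : p * β' * δ'' = Nat.lcm n (p * β') := by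
    rw [hδ'']; exact Nat.mul_div_cancel' (Nat.dvd_lcm_right _ _)
  have htpos : 0 < Nat.lcm q r := Nat.lcm_pos hq hr
  have hβpos : 0 < β' := by
    rcases Nat.eq_zero_or_pos β' with h | h
    · rw [h, mul_zero] at hqβ'; omega
    · exact h
  have hγpos : 0 < γ' := by
    rcases Nat.eq_zero_or_pos γ' with h | h
    · rw [h, mul_zero] at hrγ'; omega
    · exact h
  have ht2pos : 0 < Nat.lcm n (p * β') := Nat.lcm_pos hn (Nat.mul_pos hp hβpos)
  have hδpos : 0 < δ'' := by
    rcases Nat.eq_zero_or_pos δ'' with h | h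
    · rw [h, mul_zero] at hpδ; omega
    · exact h
  have hi' : i < m * (Nat.lcm n (p * (Nat.lcm q r / q)) / n) := by
    rw [← hβ', ← hα₂]; exact hi
  have hj' : j < s * (Nat.lcm q r / r) *
      (Nat.lcm n (p * (Nat.lcm q r / q)) / (p * (Nat.lcm q r / q))) := by
    rw [← hβ', ← hγ', ← hδ'']; exact hj
  rw [smul2_ev A (smul2 B C) hi' hj']
  simp only [← hβ', ← hγ', ← hα₂, ← hδ'']
  have hstep : ∀ k ∈ Finset.range (Nat.lcm n (p * β')),
      ev A (i / α₂) (k / α₂) * ev (smul2 B C) (k / δ'') (j / δ'') =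
      ev A (i / α₂) (k / α₂) *
        ((∑ l ∈ Finset.range (Nat.lcm q r),
            ev B (k / (δ'' * β')) (l / β') * ev C (l / γ') (j / (δ'' * γ'))) /
          ((β' * γ' : ℕ) : ℝ)) := by
    intro k hk
    have h1 : k / δ'' < p * (Nat.lcm q r / q) := by
      rw [← hβ']
      refine Nat.div_lt_of_lt_mul ?_
      rw [mul_comm δ'' (p * β'), hpδ]
      exact Finset.mem_range.mp hk
    have h2 : j / δ'' < s * (Nat.lcm q r / r) := by
      rw [← hγ']
      exact Nat.div_lt_of_lt_mul (lt_of_lt_of_eq hj (mul_comm _ _))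
    rw [smul2_ev B C h1 h2]
    simp only [← hβ', ← hγ', Nat.div_div_eq_div_mul]
  rw [Finset.sum_congr rfl hstep]
  have hstep2 : ∀ k ∈ Finset.range (Nat.lcm n (p * β')),
      ev A (i / α₂) (k / α₂) *
        ((∑ l ∈ Finset.range (Nat.lcm q r),
            ev B (k / (δ'' * β')) (l / β') * ev C (l / γ') (j / (δ'' * γ'))) /
          ((β' * γ' : ℕ) : ℝ)) =
      (∑ l ∈ Finset.range (Nat.lcm q r * δ''),
          ev A (i / α₂) (k / α₂) *
            (ev B (k / (δ'' * β')) (l / (δ'' * β')) *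
              ev C (l / (δ'' * γ')) (j / (δ'' * γ')))) /
        ((δ'' : ℝ) * ((β' * γ' : ℕ) : ℝ)) := by
    intro k _
    have hexp := sum_div_expand
      (fun l => ev B (k / (δ'' * β')) (l / β') * ev C (l / γ') (j / (δ'' * γ')))
      (Nat.lcm q r) δ'' hδpos
    simp only [Nat.div_div_eq_div_mul] at hexp
    rw [← Finset.mul_sum, hexp, mul_div_assoc,
      mul_div_mul_left _ _ (by positivity : (δ'' : ℝ) ≠ 0)]
  rw [Finset.sum_congr rfl hstep2]
  rw [← Finset.sum_div, div_div]
  rw [show Nat.lcm n (p * β') = n * α₂ from hnα₂.symm,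
    show Nat.lcm q r * δ'' = q * (δ'' * β') by rw [← hqβ']; ring]
  congr 1
  push_cast
  ring

private lemma matrix_heq {x y x' y' : ℕ} (hx : x = x') (hy : y = y')
    (M : Matrix (Fin x) (Fin y) ℝ) (N : Matrix (Fin x') (Fin y') ℝ)
    (h : ∀ (i : Fin x) (j : Fin y), M i j = N (Fin.cast hx i) (Fin.cast hy j)) :
    HEq M N := by
  subst hx; subst hy
  apply heq_of_eq
  ext i j
  simpa using h i j

/-- associativity of the second semi-tensor product. -/
theorem stmt_5 {m n p q r s : ℕ} (hm : 0 < m) (hn : 0 < n) (hp : 0 < p)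
    (hq : 0 < q) (hr : 0 < r) (hs : 0 < s)
    (A : Matrix (Fin m) (Fin n) ℝ) (B : Matrix (Fin p) (Fin q) ℝ)
    (C : Matrix (Fin r) (Fin s) ℝ) :
    HEq (smul2 (smul2 A B) C) (smul2 A (smul2 B C)) := by
  have hT : Nat.lcm n p * (Nat.lcm (q * (Nat.lcm n p / p)) r / (q * (Nat.lcm n p / p))) = Nat.lcm n (p * (Nat.lcm q r / q)) := key_nat hn hp hq hr
  have hnα : n * (Nat.lcm n p / n) = Nat.lcm n p := lcm_eq_left n p
  have hpβ : p * (Nat.lcm n p / p) = Nat.lcm n p := lcm_eq_right n p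
  have hqβ' : q * (Nat.lcm q r / q) = Nat.lcm q r := lcm_eq_left q r
  have hrγ' : r * (Nat.lcm q r / r) = Nat.lcm q r := lcm_eq_right q r
  have hnα₂ : n * (Nat.lcm n (p * (Nat.lcm q r / q)) / n) = Nat.lcm n (p * (Nat.lcm q r / q)) := lcm_eq_left _ _
  have hpδ : (p * (Nat.lcm q r / q)) * (Nat.lcm n (p * (Nat.lcm q r / q)) / (p * (Nat.lcm q r / q))) = Nat.lcm n (p * (Nat.lcm q r / q)) :=
    Nat.mul_div_cancel' (Nat.dvd_lcm_right _ _)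
  have hqβγ : q * (Nat.lcm n p / p) * (Nat.lcm (q * (Nat.lcm n p / p)) r / (q * (Nat.lcm n p / p))) = Nat.lcm (q * (Nat.lcm n p / p)) r :=
    Nat.mul_div_cancel' (Nat.dvd_lcm_left _ _)
  have hrδ : r * (Nat.lcm (q * (Nat.lcm n p / p)) r / r) = Nat.lcm (q * (Nat.lcm n p / p)) r :=
    Nat.mul_div_cancel' (Nat.dvd_lcm_right _ _)
  have ha : (Nat.lcm (q * (Nat.lcm n p / p)) r / (q * (Nat.lcm n p / p))) * (Nat.lcm n p / n) = (Nat.lcm n (p * (Nat.lcm q r / q)) / n) := by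
    apply Nat.eq_of_mul_eq_mul_left hn
    calc n * ((Nat.lcm (q * (Nat.lcm n p / p)) r / (q * (Nat.lcm n p / p))) * (Nat.lcm n p / n)) = (n * (Nat.lcm n p / n)) * (Nat.lcm (q * (Nat.lcm n p / p)) r / (q * (Nat.lcm n p / p))) := by ring
      _ = Nat.lcm n p * (Nat.lcm (q * (Nat.lcm n p / p)) r / (q * (Nat.lcm n p / p))) := by rw [hnα]
      _ = Nat.lcm n (p * (Nat.lcm q r / q)) := hT
      _ = n * (Nat.lcm n (p * (Nat.lcm q r / q)) / n) := hnα₂.symm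
  have hb : (Nat.lcm (q * (Nat.lcm n p / p)) r / (q * (Nat.lcm n p / p))) * (Nat.lcm n p / p) = (Nat.lcm n (p * (Nat.lcm q r / q)) / (p * (Nat.lcm q r / q))) * (Nat.lcm q r / q) := by
    apply Nat.eq_of_mul_eq_mul_left hp
    calc p * ((Nat.lcm (q * (Nat.lcm n p / p)) r / (q * (Nat.lcm n p / p))) * (Nat.lcm n p / p)) = (p * (Nat.lcm n p / p)) * (Nat.lcm (q * (Nat.lcm n p / p)) r / (q * (Nat.lcm n p / p))) := by ring
      _ = Nat.lcm n p * (Nat.lcm (q * (Nat.lcm n p / p)) r / (q * (Nat.lcm n p / p))) := by rw [hpβ]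
      _ = Nat.lcm n (p * (Nat.lcm q r / q)) := hT
      _ = (p * (Nat.lcm q r / q)) * (Nat.lcm n (p * (Nat.lcm q r / q)) / (p * (Nat.lcm q r / q))) := hpδ.symm
      _ = p * ((Nat.lcm n (p * (Nat.lcm q r / q)) / (p * (Nat.lcm q r / q))) * (Nat.lcm q r / q)) := by ring
  have hd : (Nat.lcm (q * (Nat.lcm n p / p)) r / r) = (Nat.lcm n (p * (Nat.lcm q r / q)) / (p * (Nat.lcm q r / q))) * (Nat.lcm q r / r) := by
    apply Nat.eq_of_mul_eq_mul_left hr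
    calc r * (Nat.lcm (q * (Nat.lcm n p / p)) r / r) = Nat.lcm (q * (Nat.lcm n p / p)) r := hrδ
      _ = q * (Nat.lcm n p / p) * (Nat.lcm (q * (Nat.lcm n p / p)) r / (q * (Nat.lcm n p / p))) := hqβγ.symm
      _ = q * ((Nat.lcm (q * (Nat.lcm n p / p)) r / (q * (Nat.lcm n p / p))) * (Nat.lcm n p / p)) := by ring
      _ = q * ((Nat.lcm n (p * (Nat.lcm q r / q)) / (p * (Nat.lcm q r / q))) * (Nat.lcm q r / q)) := by rw [hb]
      _ = (q * (Nat.lcm q r / q)) * (Nat.lcm n (p * (Nat.lcm q r / q)) / (p * (Nat.lcm q r / q))) := by ring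
      _ = Nat.lcm q r * (Nat.lcm n (p * (Nat.lcm q r / q)) / (p * (Nat.lcm q r / q))) := by rw [hqβ']
      _ = (r * (Nat.lcm q r / r)) * (Nat.lcm n (p * (Nat.lcm q r / q)) / (p * (Nat.lcm q r / q))) := by rw [hrγ']
      _ = r * ((Nat.lcm n (p * (Nat.lcm q r / q)) / (p * (Nat.lcm q r / q))) * (Nat.lcm q r / r)) := by ring
  have hrow : (m * (Nat.lcm n p / n)) * (Nat.lcm (q * (Nat.lcm n p / p)) r / (q * (Nat.lcm n p / p))) = m * (Nat.lcm n (p * (Nat.lcm q r / q)) / n) := by rw [← ha]; ring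
  have hcol : s * (Nat.lcm (q * (Nat.lcm n p / p)) r / r) = (s * (Nat.lcm q r / r)) * (Nat.lcm n (p * (Nat.lcm q r / q)) / (p * (Nat.lcm q r / q))) := by rw [hd]; ring
  refine matrix_heq hrow hcol _ _ ?_
  have key : ∀ iv jv : ℕ, ∀ _ : iv < m * (Nat.lcm n p / n) * (Nat.lcm (q * (Nat.lcm n p / p)) r / (q * (Nat.lcm n p / p))), ∀ _ : jv < s * (Nat.lcm (q * (Nat.lcm n p / p)) r / r),
      ev (smul2 (smul2 A B) C) iv jv = ev (smul2 A (smul2 B C)) iv jv := by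
    intro iv jv hiv hjv
    rw [lhs_entry hn hp hq hr A B C (Nat.lcm n p / n) (Nat.lcm n p / p) (Nat.lcm (q * (Nat.lcm n p / p)) r / (q * (Nat.lcm n p / p))) (Nat.lcm (q * (Nat.lcm n p / p)) r / r) rfl rfl rfl rfl hiv hjv,
      rhs_entry hn hp hq hr A B C (Nat.lcm q r / q) (Nat.lcm q r / r) (Nat.lcm n (p * (Nat.lcm q r / q)) / n) (Nat.lcm n (p * (Nat.lcm q r / q)) / (p * (Nat.lcm q r / q))) rfl rfl rfl rfl
        (hrow ▸ hiv) (hcol ▸ hjv)]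
    rw [ha, hb, hd]
  intro i j
  rw [ev_eq (smul2 (smul2 A B) C), ev_eq (smul2 A (smul2 B C))]
  simp only [Fin.coe_cast]
  exact key (i : ℕ) (j : ℕ) i.isLt j.isLt
end

section
/- For all real matrices A, B and real (column) vectors x of arbitrary finite dimensions, (A ∘ B) ⊙ x = A ⊙ (B ⊙ x), where ∘ is the second semi-tensor product of matrices and ⊙ is the MV-2 product of a matrix with a vector. -/
open Matrix

/-!
Extend vectors and matrices by zero to functions on `ℕ`. Then `x ⊗ 1_k` is the stretched
function `j ↦ x (j / k)`, `A ⊗ J_k` is the kernel `(i, j) ↦ A (i / k) (j / k) / k`, and matrix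
products are sums over `range`. Stretching by `k` commutes with these products (each block of `k`
equal terms is cancelled by the factor `1 / k`), so a product computed at a common multiple of the
dimensions is the product at their `lcm`, stretched. Both sides of the identity thus become the
same product of stretched `A`, `B`, `x`; the dimensions agree by `Nat.lcm_mul_lcm_div_eq`.
-/

open Finset

theorem Nat.lcm_div_left_pos {a b : ℕ} (ha : 0 < a) (hb : 0 < b) : 0 < Nat.lcm a b / a :=
  Nat.div_pos (Nat.le_of_dvd (Nat.lcm_pos ha hb) (Nat.dvd_lcm_left a b)) ha

theorem Nat.lcm_div_right_pos {a b : ℕ} (ha : 0 < a) (hb : 0 < b) : 0 < Nat.lcm a b / b :=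
  Nat.div_pos (Nat.le_of_dvd (Nat.lcm_pos ha hb) (Nat.dvd_lcm_right a b)) hb

theorem Nat.lcm_mul_lcm_div_eq (n p q r : ℕ) :
    Nat.lcm n (p * (Nat.lcm q r / q)) =
      Nat.lcm n p * (Nat.lcm (q * (Nat.lcm n p / p)) r / (q * (Nat.lcm n p / p))) := by
  set t := Nat.lcm n p
  set β := t / p
  set u := Nat.lcm q r / q
  set s := Nat.lcm (q * β) r / (q * β)
  have hβ : p * β = t := Nat.mul_div_cancel' (Nat.dvd_lcm_right n p)
  have hu : q * u = Nat.lcm q r := Nat.mul_div_cancel' (Nat.dvd_lcm_left q r)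
  have hs : q * β * s = Nat.lcm (q * β) r := Nat.mul_div_cancel' (Nat.dvd_lcm_left _ _)
  rcases (q * β).eq_zero_or_pos with h0 | hqβ
  · rw [show s = 0 by simp [s, h0], Nat.mul_zero, Nat.lcm_eq_zero_iff]
    rcases Nat.mul_eq_zero.1 h0 with hq | hβ0
    · simp [u, hq]
    · rw [hβ0, Nat.mul_zero, eq_comm, Nat.lcm_eq_zero_iff] at hβ
      rcases hβ with hn | hp <;> simp [*]
  refine Nat.eq_of_mul_eq_mul_right hqβ ?_
  calc Nat.lcm n (p * u) * (q * β)
      = Nat.lcm (q * (n * β)) (Nat.lcm q r * t) := by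
        rw [← Nat.lcm_mul_right, ← hu, ← hβ]; ring_nf
    _ = Nat.lcm (q * Nat.lcm (n * β) t) (r * t) := by
        rw [← Nat.lcm_mul_right, ← Nat.lcm_assoc, Nat.lcm_mul_left]
    _ = Nat.lcm (q * β * t) (r * t) := by
        rw [show Nat.lcm (n * β) t = t * β by rw [← hβ, Nat.lcm_mul_right, hβ]]; ring_nf
    _ = t * s * (q * β) := by
        rw [Nat.lcm_mul_right, ← hs]; ring

theorem Nat.lcm_div_relations (n p q r : ℕ) (hp : 0 < p) (hr : 0 < r) :
    let β := Nat.lcm n p / p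
    let u := Nat.lcm q r / q
    let s := Nat.lcm (q * β) r / (q * β)
    let c := Nat.lcm n (p * u) / (p * u)
    Nat.lcm n (p * u) / n = Nat.lcm n p / n * s ∧ β * s = u * c ∧
      Nat.lcm (q * β) r / r = Nat.lcm q r / r * c := by
  intro β u s c
  have key : Nat.lcm n (p * u) = Nat.lcm n p * s := Nat.lcm_mul_lcm_div_eq n p q r
  have hβs : β * s = u * c := by
    refine Nat.eq_of_mul_eq_mul_left hp ?_
    rw [← Nat.mul_assoc, Nat.mul_div_cancel' (Nat.dvd_lcm_right n p), ← key, ← Nat.mul_assoc,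
      Nat.mul_div_cancel' (Nat.dvd_lcm_right _ _)]
  refine ⟨by rw [key, Nat.mul_div_right_comm (Nat.dvd_lcm_left n p)], hβs, ?_⟩
  refine Nat.eq_of_mul_eq_mul_left hr ?_
  calc r * (Nat.lcm (q * β) r / r) = q * β * s := by
        rw [Nat.mul_div_cancel' (Nat.dvd_lcm_right _ _), Nat.mul_div_cancel' (Nat.dvd_lcm_left _ _)]
    _ = q * u * c := by rw [Nat.mul_assoc, hβs, Nat.mul_assoc]
    _ = r * (Nat.lcm q r / r * c) := by
        rw [Nat.mul_div_cancel' (Nat.dvd_lcm_left q r), ← Nat.mul_assoc,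
          Nat.mul_div_cancel' (Nat.dvd_lcm_right q r)]

theorem Finset.sum_range_mul_comp_div {M : Type*} [AddCommMonoid M] (f : ℕ → M) (t k : ℕ) :
    ∑ j ∈ range (t * k), f (j / k) = k • ∑ j ∈ range t, f j := by
  induction t with
  | zero => simp
  | succ t ih =>
    have hblock : ∀ x ∈ range k, f ((t * k + x) / k) = f t := fun x hx => by
      rw [Nat.add_comm, Nat.add_mul_div_right _ _ (pos_of_gt (mem_range.1 hx)),
        Nat.div_eq_of_lt (mem_range.1 hx), Nat.zero_add]
    rw [Nat.succ_mul, sum_range_add, ih, sum_congr rfl hblock, sum_const, card_range,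
      sum_range_succ, smul_add]

section Kernel

variable {R : Type*}

def vecExt [Zero R] {r : ℕ} (x : Fin r → R) : ℕ → R :=
  fun j => if h : j < r then x ⟨j, h⟩ else 0

def matExt [Zero R] {m n : ℕ} (A : Matrix (Fin m) (Fin n) R) : ℕ → ℕ → R :=
  fun i j => if h : i < m ∧ j < n then A ⟨i, h.1⟩ ⟨j, h.2⟩ else 0

def stretch (k : ℕ) (y : ℕ → R) : ℕ → R :=
  fun j => y (j / k)

def stretchKer [DivisionRing R] (k : ℕ) (a : ℕ → ℕ → R) : ℕ → ℕ → R :=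
  fun i j => a (i / k) (j / k) / k

def kerMulVec [NonUnitalNonAssocSemiring R] (N : ℕ) (a : ℕ → ℕ → R) (y : ℕ → R) : ℕ → R :=
  fun i => ∑ j ∈ range N, a i j * y j

def kerMul [NonUnitalNonAssocSemiring R] (N : ℕ) (a b : ℕ → ℕ → R) : ℕ → ℕ → R :=
  fun i j => ∑ l ∈ range N, a i l * b l j

theorem stretch_stretch (k l : ℕ) (y : ℕ → R) : stretch l (stretch k y) = stretch (k * l) y := by
  funext j
  simp only [stretch, Nat.div_div_eq_div_mul, Nat.mul_comm l k]

theorem stretchKer_stretchKer [Field R] (k l : ℕ) (a : ℕ → ℕ → R) :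
    stretchKer l (stretchKer k a) = stretchKer (k * l) a := by
  funext i j
  simp only [stretchKer, Nat.div_div_eq_div_mul, Nat.cast_mul, div_div, Nat.mul_comm l k]

theorem kerMulVec_kerMul [NonUnitalSemiring R] (N l : ℕ) (a b : ℕ → ℕ → R) (y : ℕ → R) :
    kerMulVec N (kerMul l a b) y = kerMulVec l a (kerMulVec N b y) := by
  funext i
  simp only [kerMulVec, kerMul, sum_mul, mul_sum, mul_assoc]
  exact sum_comm

theorem stretch_kerMulVec [Field R] [CharZero R] {k : ℕ} (N : ℕ) (a : ℕ → ℕ → R) (y : ℕ → R)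
    (hk : 0 < k) :
    stretch k (kerMulVec N a y) = kerMulVec (N * k) (stretchKer k a) (stretch k y) := by
  funext i
  simp only [stretch, kerMulVec, stretchKer]
  rw [sum_range_mul_comp_div (fun j => a (i / k) j / k * y j), nsmul_eq_mul, mul_sum]
  have hk' : (k : R) ≠ 0 := Nat.cast_ne_zero.2 hk.ne'
  refine sum_congr rfl fun j _ => ?_
  field_simp

theorem stretchKer_kerMul [Field R] (k N : ℕ) (a b : ℕ → ℕ → R) :
    stretchKer k (kerMul N a b) = kerMul (N * k) (stretchKer k a) (stretchKer k b) := by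
  funext i j
  simp only [stretchKer, kerMul]
  rw [sum_range_mul_comp_div (fun l => a (i / k) l / k * (b l (j / k) / k)), nsmul_eq_mul,
    sum_div, mul_sum]
  refine sum_congr rfl fun l _ => ?_
  field_simp

theorem heq_of_vecExt_eq [Zero R] {r r' : ℕ} {x : Fin r → R} {y : Fin r' → R} (h : r = r')
    (hxy : vecExt x = vecExt y) : HEq x y := by
  subst h
  refine heq_of_eq (funext fun j => ?_)
  simpa [vecExt] using congrFun hxy j

theorem vecExt_comp_cast [Zero R] {r r' : ℕ} (h : r = r') (y : Fin r' → R) :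
    vecExt (fun j : Fin r => y (Fin.cast h j)) = vecExt y := by
  subst h
  rfl

theorem matExt_submatrix_cast [Zero R] {m m' n : ℕ} (h : m = m')
    (M : Matrix (Fin m') (Fin n) R) :
    matExt (M.submatrix (Fin.cast h) id) = matExt M := by
  subst h
  rfl

theorem vecExt_mulVec [NonUnitalNonAssocSemiring R] {m n : ℕ} (M : Matrix (Fin m) (Fin n) R)
    (y : Fin n → R) :
    vecExt (M *ᵥ y) = kerMulVec n (matExt M) (vecExt y) := by
  funext i
  simp only [vecExt, kerMulVec, matExt]
  split_ifs with hi
  · rw [sum_range]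
    simp [mulVec, dotProduct, hi]
  · simp [hi]

theorem matExt_mul [NonUnitalNonAssocSemiring R] {m n q : ℕ} (M : Matrix (Fin m) (Fin n) R)
    (N : Matrix (Fin n) (Fin q) R) :
    matExt (M * N) = kerMul n (matExt M) (matExt N) := by
  funext i j
  simp only [matExt, kerMul]
  split_ifs with hij
  · rw [sum_range]
    simp [mul_apply, hij]
  · refine (sum_eq_zero fun l hl => ?_).symm
    by_cases hi : i < m
    · simp [hi, show ¬j < q by tauto]
    · simp [hi]

end Kernel

theorem vecExt_vkron {r k : ℕ} (hk : 0 < k) (x : Fin r → ℝ) :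
    vecExt (vkron x k) = stretch k (vecExt x) := by
  funext j
  simp only [vecExt, vkron, stretch, Nat.div_lt_iff_lt_mul hk]

theorem matExt_mkronJ {m n : ℕ} (A : Matrix (Fin m) (Fin n) ℝ) (k : ℕ) :
    matExt (mkronJ A k) = stretchKer k (matExt A) := by
  funext i j
  rcases k.eq_zero_or_pos with rfl | hk
  · simp [matExt, stretchKer]
  simp only [matExt, mkronJ, stretchKer, Nat.div_lt_iff_lt_mul hk]
  split_ifs <;> simp

theorem vecExt_mv2 {m n r : ℕ} (hn : 0 < n) (hr : 0 < r) (A : Matrix (Fin m) (Fin n) ℝ)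
    (x : Fin r → ℝ) :
    vecExt (mv2 A x) = kerMulVec (n * (Nat.lcm n r / n))
      (stretchKer (Nat.lcm n r / n) (matExt A)) (stretch (Nat.lcm n r / r) (vecExt x)) := by
  rw [mv2, vecExt_mulVec, matExt_mkronJ, vecExt_comp_cast,
    vecExt_vkron (Nat.lcm_div_right_pos hn hr)]

theorem stretch_vecExt_mv2 {m n r k : ℕ} (hn : 0 < n) (hr : 0 < r) (hk : 0 < k)
    (A : Matrix (Fin m) (Fin n) ℝ) (x : Fin r → ℝ) :
    stretch k (vecExt (mv2 A x)) = kerMulVec (n * (Nat.lcm n r / n * k))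
      (stretchKer (Nat.lcm n r / n * k) (matExt A)) (stretch (Nat.lcm n r / r * k) (vecExt x)) := by
  rw [vecExt_mv2 hn hr, stretch_kerMulVec _ _ _ hk, stretchKer_stretchKer, stretch_stretch,
    Nat.mul_assoc]

theorem stretchKer_matExt_smul2 {m n p q : ℕ} (k : ℕ) (A : Matrix (Fin m) (Fin n) ℝ)
    (B : Matrix (Fin p) (Fin q) ℝ) :
    stretchKer k (matExt (smul2 A B)) = kerMul (n * (Nat.lcm n p / n * k))
      (stretchKer (Nat.lcm n p / n * k) (matExt A))
      (stretchKer (Nat.lcm n p / p * k) (matExt B)) := by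
  rw [smul2, matExt_mul, matExt_mkronJ, matExt_submatrix_cast, matExt_mkronJ,
    stretchKer_kerMul, stretchKer_stretchKer, stretchKer_stretchKer, Nat.mul_assoc]

theorem stmt_6_general {m n p q r : ℕ} (hn : 0 < n) (hp : 0 < p)
    (hq : 0 < q) (hr : 0 < r)
    (A : Matrix (Fin m) (Fin n) ℝ) (B : Matrix (Fin p) (Fin q) ℝ) (x : Fin r → ℝ) :
    HEq (mv2 (smul2 A B) x) (mv2 A (mv2 B x)) := by
  have hqβ : 0 < q * (Nat.lcm n p / p) := Nat.mul_pos hq (Nat.lcm_div_right_pos hn hp)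
  have hpu : 0 < p * (Nat.lcm q r / q) := Nat.mul_pos hp (Nat.lcm_div_left_pos hq hr)
  obtain ⟨hw, hβs, hv⟩ := Nat.lcm_div_relations n p q r hp hr
  refine heq_of_vecExt_eq (by rw [hw, Nat.mul_assoc]) ?_
  rw [vecExt_mv2 hqβ hr, stretchKer_matExt_smul2, kerMulVec_kerMul,
    vecExt_mv2 hn hpu, stretch_vecExt_mv2 hq hr (Nat.lcm_div_right_pos hn hpu), hw, ← hβs, ← hv,
    Nat.mul_assoc]

/-- (A ∘ B) ⊙ x = A ⊙ (B ⊙ x). -/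
theorem stmt_6 {m n p q r : ℕ} (hm : 0 < m) (hn : 0 < n) (hp : 0 < p)
    (hq : 0 < q) (hr : 0 < r)
    (A : Matrix (Fin m) (Fin n) ℝ) (B : Matrix (Fin p) (Fin q) ℝ) (x : Fin r → ℝ) :
    HEq (mv2 (smul2 A B) x) (mv2 A (mv2 B x)) :=
  stmt_6_general hn hp hq hr A B x
end

section
/- The V-addition is associative: for x ∈ ℝ^m, y ∈ ℝ^n, z ∈ ℝ^p, (x ⊞ y) ⊞ z = x ⊞ (y ⊞ z), where for vectors u ∈ ℝ^a, v ∈ ℝ^b, u ⊞ v := u ⊗ 1_{lcm(a,b)/a} + v ⊗ 1_{lcm(a,b)/b}. -/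
open Matrix

private theorem heq_of_cast_eq8 {a b : ℕ} (h : a = b) (f : Fin a → ℝ) (g : Fin b → ℝ)
    (he : ∀ j : Fin a, f j = g (Fin.cast h j)) : HEq f g := by
  subst h
  exact heq_of_eq (funext fun j => he j)

private theorem div_mul_div_key {m t T : ℕ} (hm : 0 < m) (h1 : m ∣ t) (h2 : t ∣ T) :
    T / t * (t / m) = T / m := by
  obtain ⟨a, rfl⟩ := h1
  obtain ⟨b, rfl⟩ := h2
  rcases Nat.eq_zero_or_pos a with rfl | ha
  · simp
  · rw [Nat.mul_div_cancel_left a hm, Nat.mul_div_cancel_left b (Nat.mul_pos hm ha),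
      Nat.mul_assoc, Nat.mul_div_cancel_left (a*b) hm, Nat.mul_comm]

/-- associativity of V-addition. -/
theorem stmt_8 {m n p : ℕ} (hm : 0 < m) (hn : 0 < n) (hp : 0 < p)
    (x : Fin m → ℝ) (y : Fin n → ℝ) (z : Fin p → ℝ) :
    HEq (vadd' (vadd' x y) z) (vadd' x (vadd' y z)) := by
  apply heq_of_cast_eq8 (Nat.lcm_assoc m n p)
  intro j
  simp only [vadd', vkron, Fin.coe_cast]
  have e1 : (j : ℕ) / (Nat.lcm (Nat.lcm m n) p / Nat.lcm m n) / (Nat.lcm m n / m)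
      = (j : ℕ) / (Nat.lcm (Nat.lcm m n) p / m) := by
    rw [Nat.div_div_eq_div_mul,
      div_mul_div_key hm (Nat.dvd_lcm_left m n) (Nat.dvd_lcm_left _ _)]
  have e2 : (j : ℕ) / (Nat.lcm (Nat.lcm m n) p / Nat.lcm m n) / (Nat.lcm m n / n)
      = (j : ℕ) / (Nat.lcm (Nat.lcm m n) p / n) := by
    rw [Nat.div_div_eq_div_mul,
      div_mul_div_key hn (Nat.dvd_lcm_right m n) (Nat.dvd_lcm_left _ _)]
  have e3 : (j : ℕ) / (Nat.lcm m (Nat.lcm n p) / Nat.lcm n p) / (Nat.lcm n p / n)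
      = (j : ℕ) / (Nat.lcm m (Nat.lcm n p) / n) := by
    rw [Nat.div_div_eq_div_mul,
      div_mul_div_key hn (Nat.dvd_lcm_left n p) (Nat.dvd_lcm_right _ _)]
  have e4 : (j : ℕ) / (Nat.lcm m (Nat.lcm n p) / Nat.lcm n p) / (Nat.lcm n p / p)
      = (j : ℕ) / (Nat.lcm m (Nat.lcm n p) / p) := by
    rw [Nat.div_div_eq_div_mul,
      div_mul_div_key hp (Nat.dvd_lcm_right n p) (Nat.dvd_lcm_right _ _)]
  have hL : Nat.lcm (Nat.lcm m n) p = Nat.lcm m (Nat.lcm n p) := Nat.lcm_assoc m n p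
  have e1' : (j : ℕ) / (Nat.lcm (Nat.lcm m n) p / Nat.lcm m n) / (Nat.lcm m n / m)
      = (j : ℕ) / (Nat.lcm m (Nat.lcm n p) / m) := by rw [e1]; exact congrArg (fun t => (j : ℕ) / (t / m)) hL
  have e2' : (j : ℕ) / (Nat.lcm (Nat.lcm m n) p / Nat.lcm m n) / (Nat.lcm m n / n)
      = (j : ℕ) / (Nat.lcm m (Nat.lcm n p) / n) := by rw [e2]; exact congrArg (fun t => (j : ℕ) / (t / n)) hL
  have e5 : (j : ℕ) / (Nat.lcm (Nat.lcm m n) p / p)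
      = (j : ℕ) / (Nat.lcm m (Nat.lcm n p) / p) :=
    congrArg (fun t => (j : ℕ) / (t / p)) hL
  rw [add_assoc]
  congr 1 <;> [skip; congr 1] <;>
    exact congrArg _ (Fin.ext (by simp only [e1', e2', e3, e4, e5]))
end

section
/- For x ∈ ℝ^m and y ∈ ℝ^n, the dimension-free distance d_V(x,y) := ‖x ⊟ y‖_V equals zero if and only if there exist positive integers α, β such that x ⊗ 1_α = y ⊗ 1_β. -/
open Matrix

private theorem vkron_val {m : ℕ} (x : Fin m → ℝ) (k : ℕ) (j : Fin (m * k))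
    (h : (j : ℕ) / k < m) : vkron x k j = x ⟨(j : ℕ) / k, h⟩ := rfl

private theorem vnorm_eq_zero {r : ℕ} (hr : 0 < r) (z : Fin r → ℝ) :
    vnorm z = 0 ↔ ∀ i, z i = 0 := by
  unfold vnorm
  rw [Real.sqrt_eq_zero (by positivity)]
  rw [div_eq_zero_iff]
  constructor
  · rintro (hs | hr')
    · intro i
      have := (Finset.sum_eq_zero_iff_of_nonneg (fun i _ => sq_nonneg (z i))).mp hs i
        (Finset.mem_univ i)
      exact pow_eq_zero_iff (n := 2) (by norm_num) |>.mp this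
    · exact absurd hr' (by positivity)
  · intro h
    left
    exact Finset.sum_eq_zero fun i _ => by rw [h i]; ring

/-- d_V(x,y) = 0 iff x ⊗ 1_α = y ⊗ 1_β for some positive α, β. -/
theorem stmt_9 {m n : ℕ} (hm : 0 < m) (hn : 0 < n) (x : Fin m → ℝ) (y : Fin n → ℝ) :
    vnorm (vsub' x y) = 0 ↔
      ∃ (α β : ℕ) (_ : 0 < α) (_ : 0 < β) (h : m * α = n * β),
        ∀ j : Fin (m * α), vkron x α j = vkron y β (Fin.cast h j) := by
  set t := Nat.lcm m n with htdef
  have ht : 0 < t := Nat.lcm_pos hm hn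
  have hα : 0 < t / m := Nat.div_pos (Nat.le_of_dvd ht (Nat.dvd_lcm_left m n)) hm
  have hβ : 0 < t / n := Nat.div_pos (Nat.le_of_dvd ht (Nat.dvd_lcm_right m n)) hn
  rw [vnorm_eq_zero ht]
  constructor
  · intro h0
    refine ⟨t / m, t / n, hα, hβ, (lcm_mid' m n).symm, ?_⟩
    intro j
    have hz := h0 (Fin.cast (lcm_eq_left m n) j)
    unfold vsub' at hz
    rw [sub_eq_zero] at hz
    unfold vkron at hz ⊢
    simpa using hz
  · rintro ⟨α, β, hα', hβ', h, hxy⟩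
    intro j
    have hmα : 0 < m * α := Nat.mul_pos hm hα'
    have htd : t ∣ m * α := Nat.lcm_dvd ⟨α, rfl⟩ ⟨β, h⟩
    obtain ⟨s, hs⟩ := htd
    have hs0 : 0 < s := by
      rcases Nat.eq_zero_or_pos s with h0 | h0
      · rw [h0, Nat.mul_zero] at hs; omega
      · exact h0
    have hαs : α = t / m * s := by
      have : m * α = m * (t / m * s) := by
        rw [← Nat.mul_assoc, lcm_eq_left m n, ← hs]
      exact Nat.eq_of_mul_eq_mul_left hm this
    have hβs : β = t / n * s := by
      have : n * β = n * (t / n * s) := by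
        rw [← Nat.mul_assoc, lcm_eq_right m n, ← h, ← hs]
      exact Nat.eq_of_mul_eq_mul_left hn this
    have hjs : (j : ℕ) * s < m * α := by
      rw [hs]
      exact (Nat.mul_lt_mul_right hs0).mpr j.isLt
    have key := hxy ⟨(j : ℕ) * s, hjs⟩
    unfold vkron at key
    unfold vsub' vkron
    rw [sub_eq_zero]
    simp only [Fin.coe_cast] at key ⊢
    have e1 : (j : ℕ) * s / α = (j : ℕ) / (t / m) := by
      rw [hαs, Nat.mul_div_mul_right _ _ hs0]
    have e2 : (j : ℕ) * s / β = (j : ℕ) / (t / n) := by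
      rw [hβs, Nat.mul_div_mul_right _ _ hs0]
    convert key using 2
    · exact Fin.ext e1.symm
    · exact Fin.ext e2.symm
end

section
/- For ξ ∈ ℝ^m, let x = π(ξ) ∈ ℝ^n be its projection, given by x_i = (1/β)Σ_{j=1}^β η_{(i−1)β+j} with η = ξ ⊗ 1_{t/m}, t = lcm(m,n), β = t/n. Then the residual ξ ⊟ x is orthogonal to x in the dimension-free inner product: ⟨ξ ⊟ x, x⟩_V = 0. -/
open Matrix

/-- the residual `ξ ⊟ π(ξ)` is orthogonal to `π(ξ)`: `⟨ξ ⊟ x, x⟩_V = 0`. -/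
theorem stmt_12 {m n : ℕ} (hm : 0 < m) (hn : 0 < n) (ξ : Fin m → ℝ)
    (α β : ℕ) (hα : α = Nat.lcm m n / m) (hβ : β = Nat.lcm m n / n)
    (η : Fin (m * α) → ℝ) (hη : η = vkron ξ α)
    (x : Fin n → ℝ)
    (hx : ∀ i : Fin n, x i = (∑ j : Fin β, η ⟨i.1 * β + j.1, by
      have h1 : i.1 * β + j.1 < n * β :=
        lt_of_lt_of_le
          (by calc i.1 * β + j.1 < i.1 * β + β := Nat.add_lt_add_left j.isLt _
                _ = (i.1 + 1) * β := by ring)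
          (Nat.mul_le_mul_right β i.isLt)
      have h2 : m * α = n * β := by
        rw [hα, hβ, Nat.mul_div_cancel' (Nat.dvd_lcm_left m n),
          Nat.mul_div_cancel' (Nat.dvd_lcm_right m n)]
      exact lt_of_lt_of_eq h1 h2.symm⟩) / β) :
        vinner (vsub' ξ x) x = 0 := by
  subst hα hβ hη
  have hmd : m ∣ Nat.lcm m n := Nat.dvd_lcm_left m n
  have hnd : n ∣ Nat.lcm m n := Nat.dvd_lcm_right m n
  have htpos : 0 < Nat.lcm m n := Nat.pos_of_ne_zero (Nat.lcm_ne_zero hm.ne' hn.ne')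
  have htm : m * (Nat.lcm m n / m) = Nat.lcm m n := Nat.mul_div_cancel' hmd
  have htn : n * (Nat.lcm m n / n) = Nat.lcm m n := Nat.mul_div_cancel' hnd
  have hβpos : 0 < Nat.lcm m n / n := Nat.div_pos (Nat.le_of_dvd htpos hnd) hn
  have hlt : Nat.lcm (Nat.lcm m n) n = Nat.lcm m n :=
    Nat.dvd_antisymm (Nat.lcm_dvd dvd_rfl hnd) (Nat.dvd_lcm_left _ _)
  have h1 : Nat.lcm (Nat.lcm m n) n / Nat.lcm m n = 1 := by rw [hlt, Nat.div_self htpos]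
  have h2 : Nat.lcm (Nat.lcm m n) n / n = Nat.lcm m n / n := by rw [hlt]
  unfold vinner
  rw [div_eq_zero_iff]
  left
  have hT : n * (Nat.lcm m n / n) = Nat.lcm (Nat.lcm m n) n := by rw [hlt, htn]
  rw [← Fintype.sum_equiv (finProdFinEquiv.trans (finCongr hT))
    (fun p : Fin n × Fin (Nat.lcm m n / n) =>
      vkron (vsub' ξ x) (Nat.lcm (Nat.lcm m n) n / Nat.lcm m n)
        (Fin.cast (lcm_eq_left (Nat.lcm m n) n).symm ((finProdFinEquiv.trans (finCongr hT)) p)) *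
      vkron x (Nat.lcm (Nat.lcm m n) n / n)
        (Fin.cast (lcm_eq_right (Nat.lcm m n) n).symm ((finProdFinEquiv.trans (finCongr hT)) p)))
    _ (fun p => rfl)]
  rw [Fintype.sum_prod_type]
  apply Finset.sum_eq_zero
  intro i _
  have hval : ∀ k : Fin (Nat.lcm m n / n),
      (((finProdFinEquiv.trans (finCongr hT)) (i, k) : Fin (Nat.lcm (Nat.lcm m n) n)) : ℕ)
        = k.1 + (Nat.lcm m n / n) * i.1 := fun k => rfl
  have hdiv : ∀ k : Fin (Nat.lcm m n / n),
      (k.1 + (Nat.lcm m n / n) * i.1) / (Nat.lcm m n / n) = i.1 := fun k => by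
    rw [Nat.add_mul_div_left _ _ hβpos, Nat.div_eq_of_lt k.isLt, Nat.zero_add]
  have hbnd : ∀ k : Fin (Nat.lcm m n / n), k.1 + (Nat.lcm m n / n) * i.1 < Nat.lcm m n := by
    intro k
    have h5 := ((finProdFinEquiv.trans (finCongr hT)) (i, k)).isLt
    rw [hval k] at h5
    omega
  have hterm : ∀ k : Fin (Nat.lcm m n / n),
      vkron (vsub' ξ x) (Nat.lcm (Nat.lcm m n) n / Nat.lcm m n)
        (Fin.cast (lcm_eq_left (Nat.lcm m n) n).symm ((finProdFinEquiv.trans (finCongr hT)) (i, k))) *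
      vkron x (Nat.lcm (Nat.lcm m n) n / n)
        (Fin.cast (lcm_eq_right (Nat.lcm m n) n).symm ((finProdFinEquiv.trans (finCongr hT)) (i, k)))
      = (ξ ⟨(k.1 + (Nat.lcm m n / n) * i.1) / (Nat.lcm m n / m),
            Nat.div_lt_of_lt_mul (by rw [Nat.mul_comm (Nat.lcm m n / m) m, htm]; exact hbnd k)⟩
          - x i) * x i := by
    intro k
    simp only [vkron, vsub', Fin.coe_cast, hval k]
    congr 1
    · congr 1
      · congr 1
        exact Fin.ext (by simp only [h1, Nat.div_one])
      · congr 1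
        exact Fin.ext (by simp only [h1, Nat.div_one, hdiv k])
    · congr 1
      exact Fin.ext (by simp only [h2, hdiv k])
  rw [Finset.sum_congr rfl (fun k _ => hterm k)]
  rw [← Finset.sum_mul, Finset.sum_sub_distrib]
  have hxsum : (∑ k : Fin (Nat.lcm m n / n),
      ξ ⟨(k.1 + (Nat.lcm m n / n) * i.1) / (Nat.lcm m n / m),
          Nat.div_lt_of_lt_mul (by rw [Nat.mul_comm (Nat.lcm m n / m) m, htm]; exact hbnd k)⟩)
      = ((Nat.lcm m n / n : ℕ) : ℝ) * x i := by
    rw [hx i, mul_comm ((Nat.lcm m n / n : ℕ) : ℝ), div_mul_cancel₀ _ (by exact_mod_cast hβpos.ne' : ((Nat.lcm m n / n : ℕ) : ℝ) ≠ 0)]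
    apply Finset.sum_congr rfl
    intro k _
    simp only [vkron]
    congr 1
    exact Fin.ext (by congr 1; ring_nf)
  rw [hxsum]
  simp [Finset.sum_const, nsmul_eq_mul]
end

section
/- If m ≥ n, the matrix Π^m_n := (1/β)(I_n ⊗ 1_βᵀ)(I_m ⊗ 1_α) ∈ M_{n×m}(ℝ) (with t = lcm(m,n), α = t/m, β = t/n) has full row rank n; consequently Π^m_n (Π^m_n)ᵀ is invertible. -/
open Matrix

open Finset in

private lemma key_zero (n m α β : ℕ) (hα : 0 < α) (hαβ : α ≤ β)
    (ht : n * β = m * α) (g : ℕ → ℝ)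
    (hblock : ∀ i k, i < n → i * β ≤ k → k < (i+1) * β → g k = g (i * β))
    (hcol : ∀ j, j < m → ∑ k ∈ Finset.Ico (j*α) ((j+1)*α), g k = 0) :
    ∀ i, i < n → g (i * β) = 0 := by
  have hβ : 0 < β := lt_of_lt_of_le hα hαβ
  set S : ℕ → ℝ := fun x => ∑ k ∈ Finset.Ico 0 x, g k with hS
  -- S vanishes at multiples of α up to m
  have hS0 : ∀ j, j ≤ m → S (j * α) = 0 := by
    intro j hj
    induction j with
    | zero => simp [hS]
    | succ j ih =>
      have hj' : j ≤ m := Nat.le_of_succ_le hj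
      have h1 : (0:ℕ) ≤ j * α := Nat.zero_le _
      have h2 : j * α ≤ (j+1) * α := Nat.mul_le_mul_right _ (Nat.le_succ j)
      have := Finset.sum_Ico_consecutive g h1 h2
      have hcolj := hcol j (lt_of_lt_of_le (Nat.lt_of_succ_le hj) le_rfl)
      simp only [hS] at *
      rw [← this, ih hj', hcolj, add_zero]
  -- main induction
  have main : ∀ i, i ≤ n → S (i * β) = 0 ∧ ∀ i', i' < i → g (i' * β) = 0 := by
    intro i hi
    induction i with
    | zero => exact ⟨by simp [hS], fun i' h => absurd h (Nat.not_lt_zero i')⟩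
    | succ i ih =>
      have hi' : i < n := Nat.lt_of_succ_le hi
      obtain ⟨hSi, hprev⟩ := ih (Nat.le_of_lt hi')
      set j : ℕ := i * β / α + 1 with hjdef
      have h1 : i * β < j * α := by
        rw [hjdef]
        exact (Nat.div_lt_iff_lt_mul hα).mp (Nat.lt_succ_self _)
      have h2 : j * α ≤ i * β + α := by
        have : (i * β / α) * α ≤ i * β := Nat.div_mul_le_self _ _
        calc j * α = (i*β/α)*α + α := by ring
        _ ≤ i * β + α := by omega
      have h3 : j * α ≤ (i+1) * β := by
        calc j * α ≤ i * β + α := h2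
        _ ≤ i * β + β := by omega
        _ = (i+1) * β := by ring
      have hjm : j ≤ m := by
        have : j * α ≤ m * α := le_trans h3 (by
          calc (i+1) * β ≤ n * β := Nat.mul_le_mul_right _ hi
          _ = m * α := ht)
        exact Nat.le_of_mul_le_mul_right this hα
      have hSj : S (j * α) = 0 := hS0 j hjm
      -- g is constant g(i*β) on [i*β, (i+1)*β)
      have hconst : ∀ k, i*β ≤ k → k < (i+1)*β → g k = g (i*β) :=
        fun k hk1 hk2 => hblock i k hi' hk1 hk2
      -- S(jα) = S(iβ) + (jα - iβ) * g(iβ)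
      have hsum1 : S (j*α) = S (i*β) + (j*α - i*β : ℕ) * g (i*β) := by
        have hsplit := Finset.sum_Ico_consecutive g (Nat.zero_le (i*β)) (le_of_lt h1)
        have heach : ∑ k ∈ Finset.Ico (i*β) (j*α), g k = (j*α - i*β : ℕ) * g (i*β) := by
          have hcc : ∀ k ∈ Finset.Ico (i*β) (j*α), g k = g (i*β) := by
            intro k hk
            rw [Finset.mem_Ico] at hk
            exact hconst k hk.1 (lt_of_lt_of_le hk.2 h3)
          rw [Finset.sum_congr rfl hcc, Finset.sum_const, Nat.card_Ico, nsmul_eq_mul]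
        simp only [hS] at *
        rw [← hsplit, heach]
      have hgz : g (i*β) = 0 := by
        rw [hSj, hSi, zero_add] at hsum1
        have : ((j*α - i*β : ℕ) : ℝ) ≠ 0 := by
          have : 0 < j*α - i*β := by omega
          positivity
        exact (mul_eq_zero.mp hsum1.symm).resolve_left this
      refine ⟨?_, fun i' h => ?_⟩
      · have hsplit := Finset.sum_Ico_consecutive g (Nat.zero_le (j*α)) h3
        have heach : ∑ k ∈ Finset.Ico (j*α) ((i+1)*β), g k = 0 := by
          apply Finset.sum_eq_zero
          intro k hk
          rw [Finset.mem_Ico] at hk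
          rw [hconst k (le_trans (le_of_lt h1) hk.1) hk.2, hgz]
        simp only [hS] at *
        rw [← hsplit, hSj, heach, add_zero]
      · rcases Nat.lt_succ_iff_lt_or_eq.mp h with h' | h'
        · exact hprev i' h'
        · rw [h']; exact hgz
  intro i hi
  exact (main n le_rfl).2 i hi

private lemma kron_apply' {a b c d : ℕ} (A : Matrix (Fin a) (Fin b) ℝ) (B : Matrix (Fin c) (Fin d) ℝ)
    (i : Fin (a*c)) (j : Fin (b*d)) :
    kron A B i j = A i.divNat j.divNat * B i.modNat j.modNat := by
  simp [kron, Matrix.reindex_apply, Matrix.submatrix_apply, Matrix.kroneckerMap_apply]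

private lemma vecMul_PiMat (m n : ℕ) (y : Fin n → ℝ) (j : Fin m) :
    Matrix.vecMul y (PiMat m n) j =
      ((Nat.lcm m n / n : ℕ) : ℝ)⁻¹ *
      ∑ k ∈ Finset.range (n * (Nat.lcm m n / n)),
        (if k / (Nat.lcm m n / m) = (j:ℕ) then
          (if h : k / (Nat.lcm m n / n) < n then y ⟨k / (Nat.lcm m n / n), h⟩ else 0) else 0) := by
  set α := Nat.lcm m n / m with hα
  set β := Nat.lcm m n / n with hβ
  set P := (kron (1 : Matrix (Fin n) (Fin n) ℝ) (onesRowM β)).submatrix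
      (Fin.cast (Nat.mul_one n).symm) id with hP
  set Q := (kron (1 : Matrix (Fin m) (Fin m) ℝ) (onesColM α)).submatrix
      (Fin.cast (lcm_mid' m n)) (Fin.cast (Nat.mul_one m).symm) with hQ
  have hPapp : ∀ (i : Fin n) (k : Fin (n * β)),
      P i k = if ((i:ℕ) = (k:ℕ)/β) then 1 else 0 := by
    intro i k
    rw [hP, Matrix.submatrix_apply, kron_apply']
    simp [onesRowM, Matrix.one_apply, Fin.divNat, Fin.ext_iff]
  have hQapp : ∀ (k : Fin (n * β)), Q k j = if ((k:ℕ)/α = (j:ℕ)) then 1 else 0 := by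
    intro k
    rw [hQ, Matrix.submatrix_apply, kron_apply']
    simp [onesColM, Matrix.one_apply, Fin.divNat, Fin.ext_iff]
  have hPi : PiMat m n = ((β : ℕ) : ℝ)⁻¹ • (P * Q) := rfl
  rw [hPi]
  have hsm : (Matrix.vecMul y (((β : ℕ) : ℝ)⁻¹ • (P * Q))) j =
      ((β : ℕ) : ℝ)⁻¹ * ((Matrix.vecMul y (P * Q)) j) := by
    simp only [Matrix.vecMul, dotProduct, Matrix.smul_apply, smul_eq_mul, Finset.mul_sum]
    exact Finset.sum_congr rfl fun i _ => by ring
  rw [hsm]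
  congr 1
  rw [← Matrix.vecMul_vecMul]
  simp only [Matrix.vecMul, dotProduct, hPapp, hQapp]
  have hterm : ∀ k : Fin (n * β),
      (∑ i : Fin n, y i * (if ((i:ℕ) = (k:ℕ)/β) then (1:ℝ) else 0)) *
        (if ((k:ℕ)/α = (j:ℕ)) then (1:ℝ) else 0) =
      (if (k:ℕ) / α = (j:ℕ) then
          (if h : (k:ℕ) / β < n then y ⟨(k:ℕ) / β, h⟩ else 0) else 0) := by
    intro k
    have hk : (k:ℕ)/β < n := Nat.div_lt_of_lt_mul (Nat.mul_comm n β ▸ k.isLt)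
    have hin : (∑ i : Fin n, y i * (if ((i:ℕ) = (k:ℕ)/β) then (1:ℝ) else 0)) =
        y ⟨(k:ℕ)/β, hk⟩ := by
      have : ∀ i : Fin n, y i * (if ((i:ℕ) = (k:ℕ)/β) then (1:ℝ) else 0) =
          (if i = ⟨(k:ℕ)/β, hk⟩ then y i else 0) := by
        intro i
        by_cases h : (i:ℕ) = (k:ℕ)/β <;> simp [h, Fin.ext_iff]
      rw [Finset.sum_congr rfl (fun i _ => this i), Finset.sum_ite_eq']
      simp
    rw [hin, dif_pos hk]
    by_cases h : (k:ℕ)/α = (j:ℕ) <;> simp [h]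
  rw [Finset.sum_congr rfl (fun k _ => hterm k)]
  exact Fin.sum_univ_eq_sum_range
    (fun k => if k / α = (j:ℕ) then (if h : k / β < n then y ⟨k / β, h⟩ else 0) else 0) _

private lemma vecMul_PiMat_ker (m n : ℕ) (hn : 0 < n) (hmn : n ≤ m)
    (y : Fin n → ℝ) (hy : Matrix.vecMul y (PiMat m n) = 0) : y = 0 := by
  set α := Nat.lcm m n / m with hαdef
  set β := Nat.lcm m n / n with hβdef
  have hm : 0 < m := lt_of_lt_of_le hn hmn
  have htm : m * α = Nat.lcm m n := lcm_eq_left m n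
  have htn : n * β = Nat.lcm m n := lcm_eq_right m n
  have ht0 : 0 < Nat.lcm m n := Nat.pos_of_ne_zero (Nat.lcm_ne_zero hm.ne' hn.ne')
  have hβ : 0 < β := by
    rcases Nat.eq_zero_or_pos β with h | h
    · rw [h, Nat.mul_zero] at htn; omega
    · exact h
  have hα : 0 < α := by
    rcases Nat.eq_zero_or_pos α with h | h
    · rw [h, Nat.mul_zero] at htm; omega
    · exact h
  have hαβ : α ≤ β := by
    have h1 : m * α = n * β := htm.trans htn.symm
    have h2 : m * α ≤ m * β := by
      calc m * α = n * β := h1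
      _ ≤ m * β := Nat.mul_le_mul_right _ hmn
    exact Nat.le_of_mul_le_mul_left h2 hm
  set g : ℕ → ℝ := fun k => if h : k / β < n then y ⟨k / β, h⟩ else 0 with hg
  have hblock : ∀ i k, i < n → i * β ≤ k → k < (i+1) * β → g k = g (i * β) := by
    intro i k hi hk1 hk2
    have hkdiv : k / β = i := Nat.div_eq_of_lt_le (by omega) hk2
    simp only [hg]
    rw [hkdiv]
    rw [Nat.mul_div_cancel _ hβ]
  have hcol : ∀ j, j < m → ∑ k ∈ Finset.Ico (j*α) ((j+1)*α), g k = 0 := by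
    intro j hj
    have h0 := congrFun hy ⟨j, hj⟩
    rw [vecMul_PiMat] at h0
    simp only [Pi.zero_apply] at h0
    have hβne : ((β : ℕ) : ℝ)⁻¹ ≠ 0 := by positivity
    have hsum0 : (∑ k ∈ Finset.range (n * β),
        (if k / α = j then (if h : k / β < n then y ⟨k / β, h⟩ else 0) else 0)) = 0 := by
      rcases mul_eq_zero.mp h0 with h | h
      · exact absurd h hβne
      · exact h
    have hfilter : (Finset.range (n * β)).filter (fun k => k / α = j) =
        Finset.Ico (j*α) ((j+1)*α) := by
      ext k
      simp only [Finset.mem_filter, Finset.mem_range, Finset.mem_Ico]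
      constructor
      · rintro ⟨hk, hkd⟩
        constructor
        · calc j * α = (k/α) * α := by rw [hkd]
          _ ≤ k := Nat.div_mul_le_self _ _
        · have : k < (k/α + 1) * α := (Nat.div_lt_iff_lt_mul hα).mp (Nat.lt_succ_self _)
          calc k < (k/α + 1) * α := this
          _ = (j + 1) * α := by rw [hkd]
      · rintro ⟨hk1, hk2⟩
        refine ⟨?_, Nat.div_eq_of_lt_le (by omega) hk2⟩
        calc k < (j+1) * α := hk2
        _ ≤ m * α := Nat.mul_le_mul_right _ (by omega)
        _ = n * β := htm.trans htn.symm
    rw [← hfilter]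
    rw [Finset.sum_filter]
    exact hsum0
  have hz := key_zero n m α β hα hαβ (htn.trans htm.symm) g hblock hcol
  funext i
  have := hz i i.isLt
  simp only [hg] at this
  rw [Nat.mul_div_cancel _ hβ] at this
  simp only [Pi.zero_apply]
  simpa [i.isLt] using this

/-- for m ≥ n, Π^m_n has full row rank n, and Π^m_n (Π^m_n)ᵀ is invertible. -/
theorem stmt_14 (m n : ℕ) (hn : 0 < n) (hmn : n ≤ m) :
    (PiMat m n).rank = n ∧ IsUnit (PiMat m n * (PiMat m n)ᵀ) := by
  have hker := vecMul_PiMat_ker m n hn hmn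
  have hBker : ∀ y : Fin n → ℝ, (PiMat m n * (PiMat m n)ᵀ) *ᵥ y = 0 → y = 0 := by
    intro y hy
    have h0 : y ⬝ᵥ ((PiMat m n * (PiMat m n)ᵀ) *ᵥ y) = 0 := by rw [hy, dotProduct_zero]
    rw [← Matrix.mulVec_mulVec, Matrix.dotProduct_mulVec, Matrix.mulVec_transpose,
      dotProduct_self_eq_zero] at h0
    exact hker y h0
  have hBinj : Function.Injective ((PiMat m n * (PiMat m n)ᵀ).mulVec) := by
    intro a b hab
    have : (PiMat m n * (PiMat m n)ᵀ) *ᵥ (a - b) = 0 := by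
      rw [Matrix.mulVec_sub, hab, sub_self]
    have := hBker _ this
    exact sub_eq_zero.mp this
  have hB : IsUnit (PiMat m n * (PiMat m n)ᵀ) := Matrix.mulVec_injective_iff_isUnit.mp hBinj
  refine ⟨?_, hB⟩
  have h1 : (PiMat m n * (PiMat m n)ᵀ).rank = (PiMat m n).rank :=
    Matrix.rank_self_mul_transpose _
  have h2 : (PiMat m n * (PiMat m n)ᵀ).rank = Fintype.card (Fin n) :=
    Matrix.rank_of_isUnit _ hB
  rw [← h1, h2, Fintype.card_fin]
end

section
/- For A ∈ M_{m×n}(ℝ), the dimension-free operator norm ‖A‖_V := sup_{0 ≠ x ∈ V} ‖A ⊙ x‖_V / ‖x‖_V over all nonzero finite-dimensional vectors x equals √(n/m)·√(σ_max(AᵀA)). -/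
open Matrix

/-! Write `s = t/n` and `k = t/r`. The factor `A ⊗ J_s` acts as `(A ⊗ J_s) y = (A ȳ) ⊗ 1_s`, where
`ȳ ∈ ℝ^n` collects the averages of `y` over its consecutive blocks of length `s`. The norm `‖·‖_V`
is invariant under `z ↦ z ⊗ 1_k` and, by Cauchy–Schwarz, does not increase under block averaging,
so `‖A ⊙ x‖_V = ‖A ȳ‖_V ≤ √(n/m) ‖A‖ ‖ȳ‖_V ≤ √(n/m) ‖A‖ ‖x‖_V` with `y = x ⊗ 1_k`; the factor
`√(n/m)` only converts between `‖·‖_V` and the Euclidean norms on `ℝ^n` and `ℝ^m`. Conversely, for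
`x ∈ ℝ^n` one has `ȳ = x`, so on `ℝ^n` the ratio is `√(n/m) ‖A x‖ / ‖x‖`, whose supremum is
`√(n/m) ‖A‖`. -/

open Finset

lemma vkron_apply {r : ℕ} (x : Fin r → ℝ) (k : ℕ) (j : Fin (r * k)) :
    vkron x k j = x j.divNat :=
  rfl

lemma mkronJ_apply {m n : ℕ} (A : Matrix (Fin m) (Fin n) ℝ) (s : ℕ) (i : Fin (m * s))
    (j : Fin (n * s)) : mkronJ A s i j = A i.divNat j.divNat / s :=
  rfl

lemma divNat_finProdFinEquiv {a c : ℕ} (p : Fin a × Fin c) : (finProdFinEquiv p).divNat = p.1 :=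
  congrArg Prod.fst (finProdFinEquiv.symm_apply_apply p)

lemma sum_fin_mul_eq_sum_sum {M : Type*} [AddCommMonoid M] {a c : ℕ} (f : Fin (a * c) → M) :
    ∑ i, f i = ∑ j : Fin a, ∑ b : Fin c, f (finProdFinEquiv (j, b)) := by
  rw [← finProdFinEquiv.sum_comp, Fintype.sum_prod_type]

lemma sum_comp_divNat {M : Type*} [AddCommMonoid M] {a c : ℕ} (g : Fin a → M) :
    ∑ i : Fin (a * c), g i.divNat = c • ∑ j, g j := by
  simp [sum_fin_mul_eq_sum_sum, divNat_finProdFinEquiv, smul_sum]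

lemma sqrt_mul_vnorm {r : ℕ} (z : Fin r → ℝ) :
    √r * vnorm z = ‖(WithLp.toLp 2 z : EuclideanSpace ℝ (Fin r))‖ := by
  rw [vnorm, EuclideanSpace.norm_eq, ← Real.sqrt_mul (Nat.cast_nonneg r)]
  simp only [Real.norm_eq_abs, sq_abs]
  rcases Nat.eq_zero_or_pos r with rfl | hr
  · simp
  · rw [mul_div_cancel₀ _ (by positivity)]

lemma vnorm_nonneg {r : ℕ} (z : Fin r → ℝ) : 0 ≤ vnorm z :=
  Real.sqrt_nonneg _

lemma vnorm_pos {r : ℕ} {z : Fin r → ℝ} (hz : z ≠ 0) : 0 < vnorm z := by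
  have hnorm : 0 < ‖(WithLp.toLp 2 z : EuclideanSpace ℝ (Fin r))‖ := by
    simpa using hz
  rw [← sqrt_mul_vnorm] at hnorm
  exact pos_of_mul_pos_right hnorm (Real.sqrt_nonneg _)

lemma vnorm_comp_finCast {a b : ℕ} (h : a = b) (z : Fin b → ℝ) :
    vnorm (fun j : Fin a => z (Fin.cast h j)) = vnorm z := by
  subst h
  rfl

lemma vnorm_vkron {r k : ℕ} (hk : 0 < k) (x : Fin r → ℝ) : vnorm (vkron x k) = vnorm x := by
  have hsum : ∑ i, vkron x k i ^ 2 = k * ∑ j, x j ^ 2 := by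
    rw [← nsmul_eq_mul]
    exact sum_comp_divNat fun j => x j ^ 2
  rw [vnorm, vnorm, hsum, Nat.cast_mul, mul_comm (r : ℝ), mul_div_mul_left _ _ (by positivity)]

noncomputable def blockAvg {n : ℕ} (s : ℕ) (y : Fin (n * s) → ℝ) : Fin n → ℝ :=
  fun j => (∑ b : Fin s, y (finProdFinEquiv (j, b))) / s

lemma mkronJ_mulVec {m n : ℕ} (A : Matrix (Fin m) (Fin n) ℝ) (s : ℕ) (y : Fin (n * s) → ℝ) :
    mkronJ A s *ᵥ y = vkron (A *ᵥ blockAvg s y) s := by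
  ext i
  simp only [mulVec, dotProduct, mkronJ_apply, vkron_apply, blockAvg,
    sum_fin_mul_eq_sum_sum (a := n), divNat_finProdFinEquiv, mul_div_assoc', mul_sum, sum_div]
  exact sum_congr rfl fun j _ => sum_congr rfl fun b _ => by ring

lemma blockAvg_vkron {n s : ℕ} (hs : 0 < s) (x : Fin n → ℝ) : blockAvg s (vkron x s) = x := by
  ext j
  simp [blockAvg, vkron_apply, divNat_finProdFinEquiv, hs.ne']

lemma vnorm_blockAvg_le {n s : ℕ} (y : Fin (n * s) → ℝ) : vnorm (blockAvg s y) ≤ vnorm y := by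
  have hblock (j : Fin n) :
      blockAvg s y j ^ 2 ≤ (∑ b : Fin s, y (finProdFinEquiv (j, b)) ^ 2) / s := by
    simpa only [blockAvg, card_univ, Fintype.card_fin] using
      sum_div_card_sq_le_sum_sq_div_card (s := univ)
        (f := fun b : Fin s => y (finProdFinEquiv (j, b)))
  rw [vnorm, vnorm, Nat.cast_mul, mul_comm (n : ℝ), ← div_div,
    sum_fin_mul_eq_sum_sum (fun i => y i ^ 2)]
  gcongr
  rw [sum_div]
  exact sum_le_sum fun j _ => hblock j

lemma vnorm_mulVec_le {m n : ℕ} (hm : 0 < m) (A : Matrix (Fin m) (Fin n) ℝ) (z : Fin n → ℝ) :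
    vnorm (A *ᵥ z) ≤ √(n / m) * specNorm A * vnorm z := by
  have hm' : (0 : ℝ) < √m := Real.sqrt_pos.2 (by exact_mod_cast hm)
  refine le_of_mul_le_mul_left ?_ hm'
  calc √m * vnorm (A *ᵥ z)
      = ‖LinearMap.toContinuousLinearMap (toEuclideanLin A) (WithLp.toLp 2 z)‖ :=
        sqrt_mul_vnorm _
    _ ≤ specNorm A * ‖(WithLp.toLp 2 z : EuclideanSpace ℝ (Fin n))‖ :=
        ContinuousLinearMap.le_opNorm _ _
    _ = √m * (√(n / m) * specNorm A * vnorm z) := by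
        rw [← sqrt_mul_vnorm, Real.sqrt_div' _ (Nat.cast_nonneg m)]
        field_simp

lemma sqrt_div_mul_specNorm_le {m n : ℕ} (hm : 0 < m) (A : Matrix (Fin m) (Fin n) ℝ) {c : ℝ}
    (hc : 0 ≤ c) (h : ∀ z : Fin n → ℝ, z ≠ 0 → vnorm (A *ᵥ z) / vnorm z ≤ c) :
    √(n / m) * specNorm A ≤ c := by
  have hm' : (0 : ℝ) < √m := Real.sqrt_pos.2 (by exact_mod_cast hm)
  rw [specNorm, ← Real.norm_of_nonneg (Real.sqrt_nonneg _), ← norm_smul]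
  refine ContinuousLinearMap.opNorm_le_bound _ hc fun v => ?_
  rcases eq_or_ne v 0 with rfl | hv
  · simp
  have hz : WithLp.ofLp v ≠ 0 := by simpa using hv
  have hvnorm := (div_le_iff₀ (vnorm_pos hz)).1 (h _ hz)
  calc ‖(√(n / m) • LinearMap.toContinuousLinearMap (toEuclideanLin A)) v‖
      = √n * vnorm (A *ᵥ WithLp.ofLp v) := by
        rw [_root_.smul_apply, norm_smul, Real.norm_of_nonneg (Real.sqrt_nonneg _),
          Real.sqrt_div' _ (Nat.cast_nonneg m), ← sqrt_mul_vnorm]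
        field_simp
        rfl
    _ ≤ √n * (c * vnorm (WithLp.ofLp v)) := by gcongr
    _ = c * ‖v‖ := by rw [mul_left_comm, sqrt_mul_vnorm, WithLp.toLp_ofLp]

lemma lcm_div_left_pos {n r : ℕ} (hn : 0 < n) (hr : 0 < r) : 0 < Nat.lcm n r / n :=
  Nat.div_pos (Nat.le_of_dvd (Nat.lcm_pos hn hr) (Nat.dvd_lcm_left n r)) hn

lemma lcm_div_right_pos {n r : ℕ} (hn : 0 < n) (hr : 0 < r) : 0 < Nat.lcm n r / r :=
  Nat.div_pos (Nat.le_of_dvd (Nat.lcm_pos hn hr) (Nat.dvd_lcm_right n r)) hr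

lemma vnorm_mv2_le {m n r : ℕ} (hm : 0 < m) (hn : 0 < n) (hr : 0 < r)
    (A : Matrix (Fin m) (Fin n) ℝ) (x : Fin r → ℝ) :
    vnorm (mv2 A x) ≤ √(n / m) * specNorm A * vnorm x := by
  set y : Fin (n * (Nat.lcm n r / n)) → ℝ :=
    fun j => vkron x (Nat.lcm n r / r) (Fin.cast (lcm_mid n r) j)
  calc vnorm (mv2 A x)
      = vnorm (A *ᵥ blockAvg _ y) := by
        rw [mv2, mkronJ_mulVec, vnorm_vkron (lcm_div_left_pos hn hr)]
    _ ≤ √(n / m) * specNorm A * vnorm (blockAvg _ y) := vnorm_mulVec_le hm A _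
    _ ≤ √(n / m) * specNorm A * vnorm y :=
        mul_le_mul_of_nonneg_left (vnorm_blockAvg_le y)
          (mul_nonneg (Real.sqrt_nonneg _) (norm_nonneg _))
    _ = √(n / m) * specNorm A * vnorm x := by
        rw [vnorm_comp_finCast, vnorm_vkron (lcm_div_right_pos hn hr)]

lemma mv2_eq_vkron_mulVec {m n : ℕ} (hn : 0 < n) (A : Matrix (Fin m) (Fin n) ℝ) (x : Fin n → ℝ) :
    mv2 A x = vkron (A *ᵥ x) (Nat.lcm n n / n) := by
  change mkronJ A _ *ᵥ vkron x _ = _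
  rw [mkronJ_mulVec, blockAvg_vkron (lcm_div_left_pos hn hn)]

/-- ‖A‖_V = √(n/m)·‖A‖ (spectral norm, i.e. √σ_max(AᵀA)). -/
theorem stmt_17 {m n : ℕ} (hm : 0 < m) (hn : 0 < n) (A : Matrix (Fin m) (Fin n) ℝ) :
    sSup {c : ℝ | ∃ (r : ℕ) (_ : 0 < r) (x : Fin r → ℝ),
        x ≠ 0 ∧ c = vnorm (mv2 A x) / vnorm x} =
      Real.sqrt ((n : ℝ) / (m : ℝ)) * specNorm A := by
  set S := {c : ℝ | ∃ (r : ℕ) (_ : 0 < r) (x : Fin r → ℝ),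
    x ≠ 0 ∧ c = vnorm (mv2 A x) / vnorm x}
  have hupper : ∀ c ∈ S, c ≤ √(n / m) * specNorm A := by
    rintro c ⟨r, hr, x, hx, rfl⟩
    exact (div_le_iff₀ (vnorm_pos hx)).2 (vnorm_mv2_le hm hn hr A x)
  have hone : vnorm (mv2 A (1 : Fin 1 → ℝ)) / vnorm (1 : Fin 1 → ℝ) ∈ S :=
    ⟨1, one_pos, 1, one_ne_zero, rfl⟩
  refine le_antisymm (csSup_le ⟨_, hone⟩ hupper) (sqrt_div_mul_specNorm_le hm A ?_ fun z hz => ?_)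
  · exact le_csSup_of_le ⟨_, hupper⟩ hone (div_nonneg (vnorm_nonneg _) (vnorm_nonneg _))
  · rw [← vnorm_vkron (lcm_div_left_pos hn hn) (A *ᵥ z), ← mv2_eq_vkron_mulVec hn]
    exact le_csSup ⟨_, hupper⟩ ⟨n, hn, z, hz, rfl⟩
end

section
/- The MV-2 action descends to the quotient: if A = Λ ⊗ J_s and B = Λ ⊗ J_σ for a matrix Λ ∈ M_{n×p}(ℝ) and positive integers s, σ, and if x = z ⊗ 1_t and y = z ⊗ 1_τ for z ∈ ℝ^q and positive integers t, τ, then A ⊙ x ↔ B ⊙ y, i.e., there exist positive integers γ, δ with (A ⊙ x) ⊗ 1_γ = (B ⊙ y) ⊗ 1_δ. In fact A ⊙ x = (Λ ⊙ z) ⊗ 1_k for some positive integer k. -/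
open Matrix

private def extV {m : ℕ} (v : Fin m → ℝ) : ℕ → ℝ :=
  fun a => if h : a < m then v ⟨a, h⟩ else 0

private lemma extV_eq {m : ℕ} (v : Fin m → ℝ) {a : ℕ} (h : a < m) :
    extV v a = v ⟨a, h⟩ := dif_pos h

private def extM' {n p : ℕ} (Λ : Matrix (Fin n) (Fin p) ℝ) : ℕ → ℕ → ℝ :=
  fun a b => if h : a < n ∧ b < p then Λ ⟨a, h.1⟩ ⟨b, h.2⟩ else 0

private lemma extM'_eq {n p : ℕ} (Λ : Matrix (Fin n) (Fin p) ℝ) {a b : ℕ}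
    (h1 : a < n) (h2 : b < p) : extM' Λ a b = Λ ⟨a, h1⟩ ⟨b, h2⟩ := dif_pos ⟨h1, h2⟩

private lemma extM'_mkronJ {n p s : ℕ} (Λ : Matrix (Fin n) (Fin p) ℝ) {a b : ℕ}
    (ha : a < n * s) (hb : b < p * s) :
    extM' (mkronJ Λ s) a b = extM' Λ (a / s) (b / s) / s := by
  have ha' : a / s < n := Nat.div_lt_of_lt_mul (by rwa [mul_comm] at ha)
  have hb' : b / s < p := Nat.div_lt_of_lt_mul (by rwa [mul_comm] at hb)
  rw [extM'_eq _ ha hb, extM'_eq _ ha' hb', mkronJ]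

private lemma extV_vkron {q t : ℕ} (z : Fin q → ℝ) {c : ℕ} (hc : c < q * t) :
    extV (vkron z t) c = extV z (c / t) := by
  have hc' : c / t < q := Nat.div_lt_of_lt_mul (by rwa [mul_comm] at hc)
  rw [extV_eq _ hc, extV_eq _ hc', vkron]

private lemma sum_range_div (f : ℕ → ℝ) (L k : ℕ) :
    ∑ i ∈ Finset.range (L * k), f (i / k) = k * ∑ a ∈ Finset.range L, f a := by
  rcases Nat.eq_zero_or_pos k with hk | hk
  · simp [hk]
  induction L with
  | zero => simp
  | succ L ih =>
    rw [Nat.succ_mul, Finset.sum_range_add, ih, Finset.sum_range_succ, mul_add]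
    congr 1
    have hconst : ∀ i ∈ Finset.range k, f ((L * k + i) / k) = f L := by
      intro i hi
      have hi' : i < k := Finset.mem_range.mp hi
      congr 1
      rw [add_comm, Nat.add_mul_div_right _ _ hk, Nat.div_eq_of_lt hi', zero_add]
    rw [Finset.sum_congr rfl hconst, Finset.sum_const, Finset.card_range,
      nsmul_eq_mul]

private lemma mv2_apply {m n r : ℕ} (A : Matrix (Fin m) (Fin n) ℝ) (x : Fin r → ℝ)
    (jv : ℕ) (hjv : jv < m * (Nat.lcm n r / n)) :
    mv2 A x ⟨jv, hjv⟩ = ∑ i ∈ Finset.range (n * (Nat.lcm n r / n)),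
      extM' A (jv / (Nat.lcm n r / n)) (i / (Nat.lcm n r / n))
          / ((Nat.lcm n r / n : ℕ) : ℝ) *
        extV x (i / (Nat.lcm n r / r)) := by
  simp only [mv2, Matrix.mulVec, dotProduct]
  rw [← Fin.sum_univ_eq_sum_range]
  apply Finset.sum_congr rfl
  intro i _
  have hj : jv / (Nat.lcm n r / n) < m :=
    Nat.div_lt_of_lt_mul (lt_of_lt_of_eq hjv (Nat.mul_comm _ _))
  have hi : (i : ℕ) / (Nat.lcm n r / n) < n :=
    Nat.div_lt_of_lt_mul (lt_of_lt_of_eq i.isLt (Nat.mul_comm _ _))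
  have hi2 : (i : ℕ) / (Nat.lcm n r / r) < r := by
    refine Nat.div_lt_of_lt_mul ?_
    calc (i : ℕ) < n * (Nat.lcm n r / n) := i.isLt
      _ = r * (Nat.lcm n r / r) := lcm_mid n r
      _ = Nat.lcm n r / r * r := Nat.mul_comm _ _
  rw [extM'_eq _ hj hi, extV_eq _ hi2]
  simp [mkronJ, vkron]

private lemma mv2_key {n p q : ℕ} (hp : 0 < p) (hq : 0 < q)
    {s t : ℕ} (hs : 0 < s) (ht : 0 < t)
    (Λ : Matrix (Fin n) (Fin p) ℝ) (z : Fin q → ℝ) :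
    ∃ (k : ℕ) (_ : 0 < k)
      (h : n * s * (Nat.lcm (p * s) (q * t) / (p * s)) =
           n * (Nat.lcm p q / p) * k),
      ∀ j, mv2 (mkronJ Λ s) (vkron z t) j = vkron (mv2 Λ z) k (Fin.cast h j) := by
  have hℓpos : 0 < Nat.lcm (p * s) (q * t) :=
    Nat.lcm_pos (mul_pos hp hs) (mul_pos hq ht)
  have hLpos : 0 < Nat.lcm p q := Nat.lcm_pos hp hq
  have hdvd : Nat.lcm p q ∣ Nat.lcm (p * s) (q * t) := Nat.lcm_dvd
    ((dvd_mul_right p s).trans (Nat.dvd_lcm_left _ _))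
    ((dvd_mul_right q t).trans (Nat.dvd_lcm_right _ _))
  obtain ⟨k, hLk⟩ : ∃ k, Nat.lcm (p * s) (q * t) = Nat.lcm p q * k := hdvd
  have hk : 0 < k := by
    rcases Nat.eq_zero_or_pos k with h0 | h0
    · exfalso; rw [h0, mul_zero] at hLk; omega
    · exact h0
  set ℓ := Nat.lcm (p * s) (q * t) with hℓdef
  set L := Nat.lcm p q with hLdef
  set α := ℓ / (p * s) with hαdef
  set β := ℓ / (q * t) with hβdef
  set P := L / p with hPdef
  set Q := L / q with hQdef
  have hα : p * s * α = ℓ := lcm_eq_left _ _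
  have hβ : q * t * β = ℓ := lcm_eq_right _ _
  have hP : p * P = L := lcm_eq_left p q
  have hQ : q * Q = L := lcm_eq_right p q
  have hPpos : 0 < P := by
    rcases Nat.eq_zero_or_pos P with h0 | h0
    · exfalso; rw [h0, mul_zero] at hP; omega
    · exact h0
  have hsα : s * α = P * k :=
    Nat.eq_of_mul_eq_mul_left hp
      (by rw [← mul_assoc, hα, ← mul_assoc, hP, ← hLk])
  have htβ : t * β = Q * k :=
    Nat.eq_of_mul_eq_mul_left hq
      (by rw [← mul_assoc, hβ, ← mul_assoc, hQ, ← hLk])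
  have hdim : n * s * α = n * P * k := by rw [mul_assoc, hsα, ← mul_assoc]
  refine ⟨k, hk, hdim, fun j => ?_⟩
  obtain ⟨jv, hjv⟩ := j
  have hcastR : ((s : ℝ)) * α = (P : ℝ) * k := by
    exact_mod_cast congrArg Nat.cast hsα
  have hPne : (P : ℝ) ≠ 0 := Nat.cast_ne_zero.mpr hPpos.ne'
  have hkne : (k : ℝ) ≠ 0 := Nat.cast_ne_zero.mpr hk.ne'
  -- right side
  have hjk' : jv / k < n * P := by
    refine Nat.div_lt_of_lt_mul ?_
    calc jv < n * s * α := hjv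
      _ = k * (n * P) := by rw [hdim]; ring
  have rhs_eq : vkron (mv2 Λ z) k (Fin.cast hdim ⟨jv, hjv⟩) =
      mv2 Λ z ⟨jv / k, hjk'⟩ := rfl
  rw [rhs_eq, mv2_apply Λ z (jv / k) hjk']
  -- left side
  rw [show (⟨jv, hjv⟩ : Fin (n * s * (Nat.lcm (p * s) (q * t) / (p * s)))) =
      ⟨jv, hjv⟩ from rfl, mv2_apply (mkronJ Λ s) (vkron z t) jv hjv]
  rw [show Nat.lcm (p * s) (q * t) / (p * s) = α from rfl,
    show Nat.lcm (p * s) (q * t) / (q * t) = β from rfl,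
    show Nat.lcm p q / p = P from rfl, show Nat.lcm p q / q = Q from rfl,
    show p * s * α = L * k from by rw [hα, hLk],
    show p * P = L from hP]
  have lhs_eq : ∀ i ∈ Finset.range (L * k),
      extM' (mkronJ Λ s) (jv / α) (i / α) / (α : ℝ) * extV (vkron z t) (i / β) =
      (fun a : ℕ => extM' Λ (jv / k / P) (a / P) * extV z (a / Q)
          / ((P : ℝ) * k)) (i / k) := by
    intro i hi
    have hi' : i < L * k := Finset.mem_range.mp hi
    have hiℓ : i < ℓ := by rwa [← hLk] at hi'
    have hb1 : jv / α < n * s := by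
      refine Nat.div_lt_of_lt_mul ?_
      calc jv < n * s * α := hjv
        _ = α * (n * s) := by ring
    have hb2 : i / α < p * s := by
      refine Nat.div_lt_of_lt_mul ?_
      calc i < ℓ := hiℓ
        _ = α * (p * s) := by rw [← hα]; ring
    have hb3 : i / β < q * t := by
      refine Nat.div_lt_of_lt_mul ?_
      calc i < ℓ := hiℓ
        _ = β * (q * t) := by rw [← hβ]; ring
    rw [extM'_mkronJ Λ hb1 hb2, extV_vkron z hb3]
    have e1 : jv / α / s = jv / k / P := by
      rw [Nat.div_div_eq_div_mul, Nat.div_div_eq_div_mul, mul_comm α s, hsα,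
        mul_comm P k]
    have e2 : i / α / s = i / k / P := by
      rw [Nat.div_div_eq_div_mul, Nat.div_div_eq_div_mul, mul_comm α s, hsα,
        mul_comm P k]
    have e3 : i / β / t = i / k / Q := by
      rw [Nat.div_div_eq_div_mul, Nat.div_div_eq_div_mul, mul_comm β t, htβ,
        mul_comm Q k]
    rw [e1, e2, e3, div_div, mul_comm (s : ℝ) (α : ℝ), mul_comm (α : ℝ) (s : ℝ),
      hcastR]
    show _ = extM' Λ (jv / k / P) (i / k / P) * extV z (i / k / Q) / ((P : ℝ) * k)
    ring
  rw [Finset.sum_congr rfl lhs_eq,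
    sum_range_div (fun a : ℕ => extM' Λ (jv / k / P) (a / P) * extV z (a / Q)
      / ((P : ℝ) * k)) L k]
  rw [Finset.mul_sum]
  apply Finset.sum_congr rfl
  intro a _
  field_simp

/-- the MV-2 action descends to the quotient: with A = Λ ⊗ J_s,
B = Λ ⊗ J_σ, x = z ⊗ 1_t, y = z ⊗ 1_τ, one has A ⊙ x ↔ B ⊙ y, and in fact
A ⊙ x = (Λ ⊙ z) ⊗ 1_k for some positive k. -/
theorem stmt_19 {n p q : ℕ} (hn : 0 < n) (hp : 0 < p) (hq : 0 < q)
    (s σ t τ : ℕ) (hs : 0 < s) (hσ : 0 < σ) (ht : 0 < t) (hτ : 0 < τ)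
    (Λ : Matrix (Fin n) (Fin p) ℝ) (z : Fin q → ℝ)
    (A : Matrix (Fin (n * s)) (Fin (p * s)) ℝ) (hA : A = mkronJ Λ s)
    (B : Matrix (Fin (n * σ)) (Fin (p * σ)) ℝ) (hB : B = mkronJ Λ σ)
    (x : Fin (q * t) → ℝ) (hx : x = vkron z t)
    (y : Fin (q * τ) → ℝ) (hy : y = vkron z τ) :
    (∃ (γ δ : ℕ) (_ : 0 < γ) (_ : 0 < δ)
        (h : n * s * (Nat.lcm (p * s) (q * t) / (p * s)) * γ =
             n * σ * (Nat.lcm (p * σ) (q * τ) / (p * σ)) * δ),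
      ∀ j, vkron (mv2 A x) γ j = vkron (mv2 B y) δ (Fin.cast h j)) ∧
    (∃ (k : ℕ) (_ : 0 < k)
        (h : n * s * (Nat.lcm (p * s) (q * t) / (p * s)) =
             n * (Nat.lcm p q / p) * k),
      ∀ j, mv2 A x j = vkron (mv2 Λ z) k (Fin.cast h j)) := by
  subst hA hB hx hy
  obtain ⟨k₁, hk₁, h₁, H₁⟩ := mv2_key hp hq hs ht Λ z
  obtain ⟨k₂, hk₂, h₂, H₂⟩ := mv2_key hp hq hσ hτ Λ z
  constructor
  · have hdim : n * s * (Nat.lcm (p * s) (q * t) / (p * s)) * k₂ =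
        n * σ * (Nat.lcm (p * σ) (q * τ) / (p * σ)) * k₁ := by
      rw [h₁, h₂]; ring
    refine ⟨k₂, k₁, hk₂, hk₁, hdim, fun j => ?_⟩
    have L1 : vkron (mv2 (mkronJ Λ s) (vkron z t)) k₂ j =
        mv2 Λ z ⟨(j : ℕ) / k₂ / k₁, by
          refine Nat.div_lt_of_lt_mul (Nat.div_lt_of_lt_mul ?_)
          calc (j : ℕ) < n * s * (Nat.lcm (p * s) (q * t) / (p * s)) * k₂ :=
                j.isLt
            _ = k₂ * (k₁ * (n * (Nat.lcm p q / p))) := by rw [h₁]; ring⟩ := by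
      rw [show vkron (mv2 (mkronJ Λ s) (vkron z t)) k₂ j =
          mv2 (mkronJ Λ s) (vkron z t) ⟨(j : ℕ) / k₂, Nat.div_lt_of_lt_mul
            (lt_of_lt_of_eq j.isLt (Nat.mul_comm _ _))⟩ from rfl]
      rw [H₁]
      rfl
    have L2 : vkron (mv2 (mkronJ Λ σ) (vkron z τ)) k₁ (Fin.cast hdim j) =
        mv2 Λ z ⟨(j : ℕ) / k₁ / k₂, by
          refine Nat.div_lt_of_lt_mul (Nat.div_lt_of_lt_mul ?_)
          calc (j : ℕ) < n * s * (Nat.lcm (p * s) (q * t) / (p * s)) * k₂ :=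
                j.isLt
            _ = k₁ * (k₂ * (n * (Nat.lcm p q / p))) := by rw [h₁]; ring⟩ := by
      rw [show vkron (mv2 (mkronJ Λ σ) (vkron z τ)) k₁ (Fin.cast hdim j) =
          mv2 (mkronJ Λ σ) (vkron z τ) ⟨(j : ℕ) / k₁, Nat.div_lt_of_lt_mul
            (lt_of_lt_of_eq (Fin.cast hdim j).isLt (Nat.mul_comm _ _))⟩ from rfl]
      rw [H₂]
      rfl
    rw [L1, L2]
    congr 1
    apply Fin.ext
    show (j : ℕ) / k₂ / k₁ = (j : ℕ) / k₁ / k₂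
    rw [Nat.div_div_eq_div_mul, Nat.div_div_eq_div_mul, Nat.mul_comm k₂ k₁]
  · exact ⟨k₁, hk₁, h₁, H₁⟩
end
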